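/- arXiv:2002.02824 — 9 statements merged into one kernel-verified Lean document; each statement's English description precedes it below -/
import Mathlib

section
/- The vertex cover game on the triangle K_3 admits no population monotonic allocation scheme. -/
/-- A finset of vertices `C` is a vertex cover of the edge-induced subgraph `G[S]`. -/
def IsVertexCoverOf {V : Type*} (G : SimpleGraph V) (C : Finset V) (S : Finset G.edgeSet) : Prop :=
  ∀ e ∈ S, ∃ v ∈ C, v ∈ (e : Sym2 V)

/-- The vertex cover number `τ(G[S])` of the edge-induced subgraph `G[S]`. -/
noncomputable def vcNum {V : Type*} (G : SimpleGraph V) (S : Finset G.edgeSet) : ℕ :=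
  sInf {n | ∃ C : Finset V, IsVertexCoverOf G C S ∧ C.card = n}

/-- The characteristic function of the vertex cover game on `G`: players are the
edges of `G` and `γ(S) = τ(G[S])`. -/
noncomputable def vcGame {V : Type*} (G : SimpleGraph V) (S : Finset G.edgeSet) : ℝ :=
  (vcNum G S : ℝ)

/-- A population monotonic allocation scheme (PMAS): efficiency on every nonempty
coalition, and monotonicity `a_{S,i} ≥ a_{T,i}` for `S ⊆ T`, `i ∈ S`. -/
def IsPMAS {α : Type*} (γ : Finset α → ℝ) (a : Finset α → α → ℝ) : Prop :=
  (∀ S : Finset α, S.Nonempty → ∑ i ∈ S, a S i = γ S) ∧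
  (∀ S T : Finset α, S ⊆ T → ∀ i ∈ S, a T i ≤ a S i)

abbrev G3 : SimpleGraph (Fin 3) := ⊤

def e01 : G3.edgeSet := ⟨s(0,1), by simp⟩
def e02 : G3.edgeSet := ⟨s(0,2), by simp⟩
def e12 : G3.edgeSet := ⟨s(1,2), by simp⟩

lemma ne0102 : e01 ≠ e02 := by simp [e01, e02, Subtype.ext_iff, Sym2.eq_iff]
lemma ne0112 : e01 ≠ e12 := by simp [e01, e12, Subtype.ext_iff, Sym2.eq_iff]
lemma ne0212 : e02 ≠ e12 := by simp [e02, e12, Subtype.ext_iff, Sym2.eq_iff]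

lemma vcNum_pair (e f : G3.edgeSet) (v : Fin 3) (hv : v ∈ (e : Sym2 (Fin 3)))
    (hv' : v ∈ (f : Sym2 (Fin 3))) : vcNum G3 {e, f} = 1 := by
  have h1 : (1 : ℕ) ∈ {n | ∃ C : Finset (Fin 3), IsVertexCoverOf G3 C {e, f} ∧ C.card = n} := by
    refine ⟨{v}, ?_, by simp⟩
    intro x hx
    rcases Finset.mem_insert.mp hx with rfl | hx
    · exact ⟨v, Finset.mem_singleton_self v, hv⟩
    · rcases Finset.mem_singleton.mp hx with rfl
      exact ⟨v, Finset.mem_singleton_self v, hv'⟩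
  refine le_antisymm (Nat.sInf_le h1) ?_
  refine le_csInf ⟨1, h1⟩ ?_
  rintro n ⟨C, hC, rfl⟩
  obtain ⟨w, hw, -⟩ := hC e (by simp)
  exact Finset.card_pos.mpr ⟨w, hw⟩

lemma vcNum_all : vcNum G3 {e01, e02, e12} = 2 := by
  have h2 : (2 : ℕ) ∈ {n | ∃ C : Finset (Fin 3), IsVertexCoverOf G3 C {e01, e02, e12} ∧ C.card = n} := by
    refine ⟨{0, 1}, ?_, by decide⟩
    intro x hx
    simp only [Finset.mem_insert, Finset.mem_singleton] at hx
    rcases hx with rfl | rfl | rfl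
    · exact ⟨0, by decide, by simp [e01]⟩
    · exact ⟨0, by decide, by simp [e02]⟩
    · exact ⟨1, by decide, by simp [e12]⟩
  refine le_antisymm (Nat.sInf_le h2) ?_
  refine le_csInf ⟨2, h2⟩ ?_
  rintro n ⟨C, hC, rfl⟩
  by_contra h
  push_neg at h
  have hle : C.card ≤ 1 := by omega
  obtain ⟨v, hvC, hv⟩ := hC e01 (by simp)
  obtain ⟨w, hwC, hw⟩ := hC e12 (by simp)
  obtain ⟨u, huC, hu⟩ := hC e02 (by simp)
  have hvw : v = w := Finset.card_le_one.mp hle v hvC w hwC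
  have hvu : v = u := Finset.card_le_one.mp hle v hvC u huC
  subst hvw; subst hvu
  simp only [e01, e02, e12, Sym2.mem_iff] at hv hw hu
  rcases hv with rfl | rfl <;> simp_all


/-- The vertex cover game on the triangle `K₃` admits no PMAS. -/
theorem no_pmas_K3 :
    ¬ ∃ a : Finset (⊤ : SimpleGraph (Fin 3)).edgeSet → (⊤ : SimpleGraph (Fin 3)).edgeSet → ℝ,
      IsPMAS (vcGame (⊤ : SimpleGraph (Fin 3))) a := by
  rintro ⟨a, heff, hmono⟩
  set N : Finset G3.edgeSet := {e01, e02, e12} with hN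
  have hmemN : e01 ∈ N ∧ e02 ∈ N ∧ e12 ∈ N := by
    refine ⟨?_, ?_, ?_⟩ <;> simp [hN]
  -- efficiency on N
  have hsumN : a N e01 + a N e02 + a N e12 = 2 := by
    have := heff N ⟨e01, hmemN.1⟩
    rw [hN] at this ⊢
    rw [Finset.sum_insert (by simp [ne0102, ne0112]), Finset.sum_pair ne0212] at this
    rw [show vcGame G3 {e01, e02, e12} = 2 by
      unfold vcGame; rw [vcNum_all]; norm_num] at this
    linarith
  -- pairs
  have pair_bound : ∀ (e f : G3.edgeSet) (v : Fin 3), e ≠ f → v ∈ (e : Sym2 (Fin 3)) →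
      v ∈ (f : Sym2 (Fin 3)) → e ∈ N → f ∈ N → a N e + a N f ≤ 1 := by
    intro e f v hef hv hv' heN hfN
    have hsub : ({e, f} : Finset G3.edgeSet) ⊆ N := by
      intro x hx; simp only [Finset.mem_insert, Finset.mem_singleton] at hx
      rcases hx with rfl | rfl <;> assumption
    have heq : a {e, f} e + a {e, f} f = 1 := by
      have := heff {e, f} ⟨e, by simp⟩
      rw [Finset.sum_pair hef] at this
      rw [show vcGame G3 {e, f} = 1 by
        unfold vcGame; rw [vcNum_pair e f v hv hv']; norm_num] at this
      linarith
    have h1 := hmono {e, f} N hsub e (by simp)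
    have h2 := hmono {e, f} N hsub f (by simp)
    linarith
  have b1 := pair_bound e01 e02 0 ne0102 (by simp [e01]) (by simp [e02]) hmemN.1 hmemN.2.1
  have b2 := pair_bound e01 e12 1 ne0112 (by simp [e01]) (by simp [e12]) hmemN.1 hmemN.2.2
  have b3 := pair_bound e02 e12 2 ne0212 (by simp [e02]) (by simp [e12]) hmemN.2.1 hmemN.2.2
  linarith
end

section
/- The vertex cover game on the path P_5 with 5 vertices (and 4 edges) admits no population monotonic allocation scheme. -/
namespace NoPMASAux
open SimpleGraph

abbrev G : SimpleGraph (Fin 5) := pathGraph 5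

def e1 : G.edgeSet := ⟨s(0, 1), by rw [mem_edgeSet, pathGraph_adj]; decide⟩
def e2 : G.edgeSet := ⟨s(1, 2), by rw [mem_edgeSet, pathGraph_adj]; decide⟩
def e3 : G.edgeSet := ⟨s(2, 3), by rw [mem_edgeSet, pathGraph_adj]; decide⟩
def e4 : G.edgeSet := ⟨s(3, 4), by rw [mem_edgeSet, pathGraph_adj]; decide⟩

lemma vc_le {S : Finset G.edgeSet} {C : Finset (Fin 5)} (h : IsVertexCoverOf G C S) :
    vcNum G S ≤ C.card := Nat.sInf_le ⟨C, h, rfl⟩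

lemma two_le_vc {S : Finset G.edgeSet} (f g : G.edgeSet) (hf : f ∈ S) (hg : g ∈ S)
    (hd : ∀ v : Fin 5, v ∈ (f : Sym2 (Fin 5)) → v ∈ (g : Sym2 (Fin 5)) → False) :
    2 ≤ vcNum G S := by
  have hne : {n | ∃ C : Finset (Fin 5), IsVertexCoverOf G C S ∧ C.card = n}.Nonempty := by
    refine ⟨Finset.univ.card, Finset.univ, fun e _ => ?_, rfl⟩
    obtain ⟨⟨u, v⟩, h⟩ := Quot.exists_rep (e : Sym2 (Fin 5))
    exact ⟨u, Finset.mem_univ u, by rw [← h]; exact Sym2.mem_mk_left u v⟩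
  obtain ⟨C, hC, hcard⟩ := Nat.sInf_mem hne
  obtain ⟨u, hu, hue⟩ := hC f hf
  obtain ⟨w, hw, hwe⟩ := hC g hg
  have huw : u ≠ w := fun h => hd u hue (h ▸ hwe)
  rw [show vcNum G S = C.card from hcard.symm]
  exact Finset.one_lt_card.mpr ⟨u, hu, w, hw, huw⟩

end NoPMASAux

open NoPMASAux in
/-- The vertex cover game on the path `P₅` (5 vertices, 4 edges) admits no PMAS. -/
theorem no_pmas_P5 :
    ¬ ∃ a : Finset (SimpleGraph.pathGraph 5).edgeSet → (SimpleGraph.pathGraph 5).edgeSet → ℝ,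
      IsPMAS (vcGame (SimpleGraph.pathGraph 5)) a := by
  rintro ⟨a, heff, hmono⟩
  have hne12 : e1 ≠ e2 := by decide
  have hne23 : e2 ≠ e3 := by decide
  have hne34 : e3 ≠ e4 := by decide
  -- coalitions
  set S12 : Finset G.edgeSet := {e1, e2} with hS12
  set S23 : Finset G.edgeSet := {e2, e3} with hS23
  set S34 : Finset G.edgeSet := {e3, e4} with hS34
  set S123 : Finset G.edgeSet := {e1, e2, e3} with hS123
  set S234 : Finset G.edgeSet := {e2, e3, e4} with hS234
  -- upper bounds on γ
  have g12 : vcGame G S12 ≤ 1 := by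
    have : vcNum G S12 ≤ ({1} : Finset (Fin 5)).card := vc_le (by unfold IsVertexCoverOf; decide)
    simpa [vcGame] using (Nat.cast_le (α := ℝ)).mpr (show vcNum G S12 ≤ 1 by simpa using this)
  have g23 : vcGame G S23 ≤ 1 := by
    have : vcNum G S23 ≤ ({2} : Finset (Fin 5)).card := vc_le (by unfold IsVertexCoverOf; decide)
    simpa [vcGame] using (Nat.cast_le (α := ℝ)).mpr (show vcNum G S23 ≤ 1 by simpa using this)
  have g34 : vcGame G S34 ≤ 1 := by
    have : vcNum G S34 ≤ ({3} : Finset (Fin 5)).card := vc_le (by unfold IsVertexCoverOf; decide)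
    simpa [vcGame] using (Nat.cast_le (α := ℝ)).mpr (show vcNum G S34 ≤ 1 by simpa using this)
  -- lower bounds on γ
  have g123 : (2 : ℝ) ≤ vcGame G S123 := by
    have := two_le_vc (S := S123) e1 e3 (by decide) (by decide) (by decide)
    simpa [vcGame] using (Nat.cast_le (α := ℝ)).mpr (show 2 ≤ vcNum G S123 from this)
  have g234 : (2 : ℝ) ≤ vcGame G S234 := by
    have := two_le_vc (S := S234) e2 e4 (by decide) (by decide) (by decide)
    simpa [vcGame] using (Nat.cast_le (α := ℝ)).mpr (show 2 ≤ vcNum G S234 from this)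
  -- efficiency sums
  have s12 : a S12 e1 + a S12 e2 = vcGame G S12 := by
    have := heff S12 ⟨e1, by decide⟩
    rwa [hS12, Finset.sum_pair hne12] at this
  have s23 : a S23 e2 + a S23 e3 = vcGame G S23 := by
    have := heff S23 ⟨e2, by decide⟩
    rwa [hS23, Finset.sum_pair hne23] at this
  have s34 : a S34 e3 + a S34 e4 = vcGame G S34 := by
    have := heff S34 ⟨e3, by decide⟩
    rwa [hS34, Finset.sum_pair hne34] at this
  have s123 : a S123 e1 + a S123 e2 + a S123 e3 = vcGame G S123 := by
    have := heff S123 ⟨e1, by decide⟩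
    rw [hS123, Finset.sum_insert (by decide), Finset.sum_pair hne23] at this
    linarith
  have s234 : a S234 e2 + a S234 e3 + a S234 e4 = vcGame G S234 := by
    have := heff S234 ⟨e2, by decide⟩
    rw [hS234, Finset.sum_insert (by decide), Finset.sum_pair hne34] at this
    linarith
  -- monotonicity
  have m1 : a S123 e1 ≤ a S12 e1 := hmono S12 S123 (by decide) e1 (by decide)
  have m2 : a S123 e2 ≤ a S12 e2 := hmono S12 S123 (by decide) e2 (by decide)
  have m3 : a S234 e3 ≤ a S34 e3 := hmono S34 S234 (by decide) e3 (by decide)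
  have m4 : a S234 e4 ≤ a S34 e4 := hmono S34 S234 (by decide) e4 (by decide)
  have m5 : a S123 e3 ≤ a S23 e3 := hmono S23 S123 (by decide) e3 (by decide)
  have m6 : a S234 e2 ≤ a S23 e2 := hmono S23 S234 (by decide) e2 (by decide)
  linarith
end

section
/- If the vertex cover game on a graph G admits a population monotonic allocation scheme, then G contains no subgraph isomorphic to K_3, C_4, or P_5 (the path with 5 vertices). -/
/-- `G` contains a subgraph isomorphic to `H`: there is an injective map of the
vertices of `H` into those of `G` carrying edges of `H` to edges of `G`. -/
def ContainsSubgraph {α β : Type*} (H : SimpleGraph α) (G : SimpleGraph β) : Prop :=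
  ∃ f : α → β, Function.Injective f ∧ ∀ ⦃u v : α⦄, H.Adj u v → G.Adj (f u) (f v)

open Finset

section Aux

variable {V : Type*} [Fintype V] {G : SimpleGraph V}

lemma vcNum_le_card {C : Finset V} {S : Finset G.edgeSet}
    (h : IsVertexCoverOf G C S) : vcNum G S ≤ C.card :=
  Nat.sInf_le ⟨C, h, rfl⟩

lemma exists_min_cover (S : Finset G.edgeSet) :
    ∃ C : Finset V, IsVertexCoverOf G C S ∧ C.card = vcNum G S := by
  have hne : {n | ∃ C : Finset V, IsVertexCoverOf G C S ∧ C.card = n}.Nonempty := by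
    refine ⟨(Finset.univ : Finset V).card, Finset.univ, fun e _ => ?_, rfl⟩
    rcases e with ⟨s, hs⟩
    induction s using Sym2.ind with
    | _ x y => exact ⟨x, Finset.mem_univ x, Sym2.mem_mk_left x y⟩
  exact Nat.sInf_mem hne

lemma one_le_vcNum {S : Finset G.edgeSet} (hS : S.Nonempty) : 1 ≤ vcNum G S := by
  obtain ⟨C, hC, hcard⟩ := exists_min_cover S
  obtain ⟨e, he⟩ := hS
  obtain ⟨v, hv, -⟩ := hC e he
  have : 0 < C.card := Finset.card_pos.mpr ⟨v, hv⟩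
  omega

lemma vcNum_eq_one {S : Finset G.edgeSet} {v : V}
    (hv : ∀ e ∈ S, v ∈ (e : Sym2 V)) (hS : S.Nonempty) : vcNum G S = 1 := by
  have hle : vcNum G S ≤ 1 := by
    have := vcNum_le_card (C := {v}) (S := S)
      (fun e he => ⟨v, Finset.mem_singleton_self v, hv e he⟩)
    simpa using this
  exact le_antisymm hle (one_le_vcNum hS)

lemma two_le_vcNum {S : Finset G.edgeSet} (hS : S.Nonempty)
    (h : ∀ v : V, ∃ e ∈ S, v ∉ (e : Sym2 V)) : 2 ≤ vcNum G S := by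
  obtain ⟨C, hC, hcard⟩ := exists_min_cover S
  have h1 : 1 ≤ vcNum G S := one_le_vcNum hS
  rcases eq_or_lt_of_le h1 with heq | hlt
  · exfalso
    have : C.card = 1 := by omega
    obtain ⟨v, rfl⟩ := Finset.card_eq_one.mp this
    obtain ⟨e, he, hve⟩ := h v
    obtain ⟨w, hw, hwe⟩ := hC e he
    rw [Finset.mem_singleton] at hw
    exact hve (hw ▸ hwe)
  · omega

lemma vcNum_eq_two {S : Finset G.edgeSet} {v w : V}
    (hvw : ∀ e ∈ S, v ∈ (e : Sym2 V) ∨ w ∈ (e : Sym2 V)) (hS : S.Nonempty)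
    (h : ∀ u : V, ∃ e ∈ S, u ∉ (e : Sym2 V)) : vcNum G S = 2 := by
  classical
  have hcov : IsVertexCoverOf G {v, w} S := by
    intro e he
    rcases hvw e he with h' | h'
    · exact ⟨v, by simp, h'⟩
    · exact ⟨w, by simp, h'⟩
  have hle : vcNum G S ≤ 2 := le_trans (vcNum_le_card hcov) (Finset.card_insert_le _ _ |>.trans (by simp))
  exact le_antisymm hle (two_le_vcNum hS h)

lemma sum_three {α : Type*} [DecidableEq α] (f : α → ℝ) {a b c : α}
    (hab : a ≠ b) (hac : a ≠ c) (hbc : b ≠ c) :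
    ∑ i ∈ ({a, b, c} : Finset α), f i = f a + f b + f c := by
  rw [Finset.sum_insert (by simp [hab, hac]), Finset.sum_insert (by simp [hbc]),
    Finset.sum_singleton, add_assoc]

lemma sum_four {α : Type*} [DecidableEq α] (f : α → ℝ) {a b c d : α}
    (hab : a ≠ b) (hac : a ≠ c) (had : a ≠ d) (hbc : b ≠ c) (hbd : b ≠ d) (hcd : c ≠ d) :
    ∑ i ∈ ({a, b, c, d} : Finset α), f i = f a + f b + f c + f d := by
  rw [Finset.sum_insert (by simp [hab, hac, had]), Finset.sum_insert (by simp [hbc, hbd]),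
    Finset.sum_insert (by simp [hcd]), Finset.sum_singleton]
  ring

end Aux

/-- If the vertex cover game on `G` admits a PMAS, then `G` contains no subgraph
isomorphic to `K₃`, `C₄`, or `P₅`. -/
theorem pmas_forbidden_subgraphs {V : Type*} [Fintype V] (G : SimpleGraph V)
    (h : ∃ a : Finset G.edgeSet → G.edgeSet → ℝ, IsPMAS (vcGame G) a) :
    ¬ ContainsSubgraph (⊤ : SimpleGraph (Fin 3)) G ∧
    ¬ ContainsSubgraph (SimpleGraph.cycleGraph 4) G ∧
    ¬ ContainsSubgraph (SimpleGraph.pathGraph 5) G := by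
  classical
  obtain ⟨a, heff, hmono⟩ := h
  -- generic consequence: a pair of edges with cover number 1 bounds allocations
  have pair_le : ∀ (E F : G.edgeSet) (T : Finset G.edgeSet), E ≠ F → E ∈ T → F ∈ T →
      vcNum G {E, F} = 1 → a T E + a T F ≤ 1 := by
    intro E F T hEF hET hFT hvc
    have hsub : ({E, F} : Finset G.edgeSet) ⊆ T := by
      intro x hx
      rcases Finset.mem_insert.mp hx with rfl | hx
      · exact hET
      · exact (Finset.mem_singleton.mp hx) ▸ hFT
    have h1 : a {E, F} E + a {E, F} F = 1 := by
      have := heff {E, F} ⟨E, by simp⟩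
      rw [Finset.sum_pair hEF] at this
      rw [this, vcGame, hvc]; norm_num
    have h2 := hmono {E, F} T hsub E (by simp)
    have h3 := hmono {E, F} T hsub F (by simp)
    linarith
  -- triple (path of length 2 inside the coalition {E,F,H}, F the middle edge)
  have triple : ∀ (E F H : G.edgeSet), E ≠ F → E ≠ H → F ≠ H →
      vcNum G {E, F} = 1 → vcNum G {F, H} = 1 → vcNum G {E, F, H} = 2 →
      1 ≤ a {E, F, H} H ∧ a {E, F, H} F ≤ 0 := by
    intro E F H hEF hEH hFH h1 h2 h3
    set S : Finset G.edgeSet := {E, F, H} with hS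
    have hsum : a S E + a S F + a S H = 2 := by
      have := heff S ⟨E, by simp [hS]⟩
      rw [hS, sum_three _ hEF hEH hFH] at this
      rw [← hS] at this
      rw [this, vcGame, h3]; norm_num
    have p1 : a S E + a S F ≤ 1 :=
      pair_le E F S hEF (by simp [hS]) (by simp [hS]) h1
    have p2 : a S F + a S H ≤ 1 :=
      pair_le F H S hFH (by simp [hS]) (by simp [hS]) h2
    constructor <;> linarith
  refine ⟨?_, ?_, ?_⟩
  -- K₃
  · rintro ⟨f, hinj, hadj⟩
    set x := f 0; set y := f 1; set z := f 2
    have hxy : G.Adj x y := hadj (by decide : (⊤ : SimpleGraph (Fin 3)).Adj 0 1)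
    have hyz : G.Adj y z := hadj (by decide : (⊤ : SimpleGraph (Fin 3)).Adj 1 2)
    have hxz : G.Adj x z := hadj (by decide : (⊤ : SimpleGraph (Fin 3)).Adj 0 2)
    have nxy : x ≠ y := hinj.ne (by decide)
    have nyz : y ≠ z := hinj.ne (by decide)
    have nxz : x ≠ z := hinj.ne (by decide)
    set E1 : G.edgeSet := ⟨s(x, y), hxy⟩
    set E2 : G.edgeSet := ⟨s(y, z), hyz⟩
    set E3 : G.edgeSet := ⟨s(x, z), hxz⟩
    have d12 : E1 ≠ E2 := by
      simp only [E1, E2, Ne, Subtype.mk_eq_mk, Subtype.ext_iff, Sym2.eq_iff]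
      tauto
    have d13 : E1 ≠ E3 := by
      simp only [E1, E3, Ne, Subtype.mk_eq_mk, Subtype.ext_iff, Sym2.eq_iff]
      tauto
    have d23 : E2 ≠ E3 := by
      simp only [E2, E3, Ne, Subtype.mk_eq_mk, Subtype.ext_iff, Sym2.eq_iff]
      tauto
    have g12 : vcNum G {E1, E2} = 1 := by
      refine vcNum_eq_one (v := y) ?_ ⟨E1, by simp⟩
      intro e he
      rcases Finset.mem_insert.mp he with rfl | he
      · simp [E1]
      · rw [Finset.mem_singleton.mp he]; simp [E2]
    have g23 : vcNum G {E2, E3} = 1 := by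
      refine vcNum_eq_one (v := z) ?_ ⟨E2, by simp⟩
      intro e he
      rcases Finset.mem_insert.mp he with rfl | he
      · simp [E2]
      · rw [Finset.mem_singleton.mp he]; simp [E3]
    have g13 : vcNum G {E1, E3} = 1 := by
      refine vcNum_eq_one (v := x) ?_ ⟨E1, by simp⟩
      intro e he
      rcases Finset.mem_insert.mp he with rfl | he
      · simp [E1]
      · rw [Finset.mem_singleton.mp he]; simp [E3]
    have gT : vcNum G {E1, E2, E3} = 2 := by
      refine vcNum_eq_two (v := x) (w := y) ?_ ⟨E1, by simp⟩ ?_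
      · intro e he
        simp only [Finset.mem_insert, Finset.mem_singleton] at he
        rcases he with rfl | rfl | rfl
        · left; simp [E1]
        · right; simp [E2]
        · left; simp [E3]
      · intro u
        by_cases hux : u = x
        · exact ⟨E2, by simp, by simp [E2, hux, Sym2.mem_iff, nxy, nxz]⟩
        · by_cases huy : u = y
          · exact ⟨E3, by simp, by
              simp [E3, huy, Sym2.mem_iff]
              exact ⟨nxy.symm, nyz⟩⟩
          · exact ⟨E1, by simp, by
              simp [E1, Sym2.mem_iff]
              exact ⟨hux, huy⟩⟩
    set T : Finset G.edgeSet := {E1, E2, E3} with hT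
    have hsum : a T E1 + a T E2 + a T E3 = 2 := by
      have := heff T ⟨E1, by simp [hT]⟩
      rw [hT, sum_three _ d12 d13 d23] at this
      rw [← hT] at this
      rw [this, vcGame, gT]; norm_num
    have p1 := pair_le E1 E2 T d12 (by simp [hT]) (by simp [hT]) g12
    have p2 := pair_le E2 E3 T d23 (by simp [hT]) (by simp [hT]) g23
    have p3 := pair_le E1 E3 T d13 (by simp [hT]) (by simp [hT]) g13
    linarith
  -- C₄
  · rintro ⟨f, hinj, hadj⟩
    set x0 := f 0; set x1 := f 1; set x2 := f 2; set x3 := f 3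
    have c01 : (SimpleGraph.cycleGraph 4).Adj 0 1 := by
      rw [SimpleGraph.cycleGraph_adj]; decide
    have c12 : (SimpleGraph.cycleGraph 4).Adj 1 2 := by
      rw [SimpleGraph.cycleGraph_adj]; decide
    have c23 : (SimpleGraph.cycleGraph 4).Adj 2 3 := by
      rw [SimpleGraph.cycleGraph_adj]; decide
    have c30 : (SimpleGraph.cycleGraph 4).Adj 3 0 := by
      rw [SimpleGraph.cycleGraph_adj]; decide
    have h01 : G.Adj x0 x1 := hadj c01
    have h12 : G.Adj x1 x2 := hadj c12
    have h23 : G.Adj x2 x3 := hadj c23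
    have h30 : G.Adj x3 x0 := hadj c30
    have n01 : x0 ≠ x1 := hinj.ne (by decide)
    have n02 : x0 ≠ x2 := hinj.ne (by decide)
    have n03 : x0 ≠ x3 := hinj.ne (by decide)
    have n12 : x1 ≠ x2 := hinj.ne (by decide)
    have n13 : x1 ≠ x3 := hinj.ne (by decide)
    have n23 : x2 ≠ x3 := hinj.ne (by decide)
    set E1 : G.edgeSet := ⟨s(x0, x1), h01⟩
    set E2 : G.edgeSet := ⟨s(x1, x2), h12⟩
    set E3 : G.edgeSet := ⟨s(x2, x3), h23⟩
    set E4 : G.edgeSet := ⟨s(x3, x0), h30⟩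
    have d12 : E1 ≠ E2 := by
      simp only [E1, E2, Ne, Subtype.mk_eq_mk, Subtype.ext_iff, Sym2.eq_iff]; tauto
    have d13 : E1 ≠ E3 := by
      simp only [E1, E3, Ne, Subtype.mk_eq_mk, Subtype.ext_iff, Sym2.eq_iff]; tauto
    have d14 : E1 ≠ E4 := by
      simp only [E1, E4, Ne, Subtype.mk_eq_mk, Subtype.ext_iff, Sym2.eq_iff]; tauto
    have d23 : E2 ≠ E3 := by
      simp only [E2, E3, Ne, Subtype.mk_eq_mk, Subtype.ext_iff, Sym2.eq_iff]; tauto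
    have d24 : E2 ≠ E4 := by
      simp only [E2, E4, Ne, Subtype.mk_eq_mk, Subtype.ext_iff, Sym2.eq_iff]; tauto
    have d34 : E3 ≠ E4 := by
      simp only [E3, E4, Ne, Subtype.mk_eq_mk, Subtype.ext_iff, Sym2.eq_iff]; tauto
    -- pair cover numbers
    have g12 : vcNum G {E1, E2} = 1 := by
      refine vcNum_eq_one (v := x1) ?_ ⟨E1, by simp⟩
      intro e he
      rcases Finset.mem_insert.mp he with rfl | he
      · simp [E1]
      · rw [Finset.mem_singleton.mp he]; simp [E2]
    have g23 : vcNum G {E2, E3} = 1 := by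
      refine vcNum_eq_one (v := x2) ?_ ⟨E2, by simp⟩
      intro e he
      rcases Finset.mem_insert.mp he with rfl | he
      · simp [E2]
      · rw [Finset.mem_singleton.mp he]; simp [E3]
    have g34 : vcNum G {E3, E4} = 1 := by
      refine vcNum_eq_one (v := x3) ?_ ⟨E3, by simp⟩
      intro e he
      rcases Finset.mem_insert.mp he with rfl | he
      · simp [E3]
      · rw [Finset.mem_singleton.mp he]; simp [E4]
    have g14 : vcNum G {E1, E4} = 1 := by
      refine vcNum_eq_one (v := x0) ?_ ⟨E1, by simp⟩
      intro e he
      rcases Finset.mem_insert.mp he with rfl | he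
      · simp [E1]
      · rw [Finset.mem_singleton.mp he]; simp [E4]
    -- E1 and E3 are disjoint, used for lower bounds
    have hdisj : ∀ u : V, u ∉ (E1 : Sym2 V) ∨ u ∉ (E3 : Sym2 V) := by
      intro u
      by_cases h : u ∈ (E1 : Sym2 V)
      · right
        simp only [E1, Sym2.mem_iff] at h
        rcases h with rfl | rfl
        · simp [E3, Sym2.mem_iff]; exact ⟨n02, n03⟩
        · simp [E3, Sym2.mem_iff]; exact ⟨n12, n13⟩
      · left; exact h
    have lower2 : ∀ S : Finset G.edgeSet, E1 ∈ S → E3 ∈ S →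
        ∀ u : V, ∃ e ∈ S, u ∉ (e : Sym2 V) := by
      intro S h1 h3 u
      rcases hdisj u with h | h
      · exact ⟨E1, h1, h⟩
      · exact ⟨E3, h3, h⟩
    have gS1 : vcNum G {E1, E2, E3} = 2 := by
      refine vcNum_eq_two (v := x1) (w := x3) ?_ ⟨E1, by simp⟩
        (lower2 _ (by simp) (by simp))
      intro e he
      simp only [Finset.mem_insert, Finset.mem_singleton] at he
      rcases he with rfl | rfl | rfl
      · left; simp [E1]
      · left; simp [E2]
      · right; simp [E3]
    have gS2 : vcNum G {E2, E3, E4} = 2 := by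
      refine vcNum_eq_two (v := x2) (w := x0) ?_ ⟨E2, by simp⟩ ?_
      · intro e he
        simp only [Finset.mem_insert, Finset.mem_singleton] at he
        rcases he with rfl | rfl | rfl
        · left; simp [E2]
        · left; simp [E3]
        · right; simp [E4]
      · -- E2 and E4 are disjoint
        intro u
        by_cases h : u ∈ (E2 : Sym2 V)
        · refine ⟨E4, by simp, ?_⟩
          simp only [E2, Sym2.mem_iff] at h
          rcases h with rfl | rfl
          · simp [E4, Sym2.mem_iff, n13, n01, n13.symm, n01.symm]
          · simp [E4, Sym2.mem_iff, n23, n02, n23.symm, n02.symm]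
        · exact ⟨E2, by simp, h⟩
    have gT : vcNum G {E1, E2, E3, E4} = 2 := by
      refine vcNum_eq_two (v := x1) (w := x3) ?_ ⟨E1, by simp⟩
        (lower2 _ (by simp) (by simp))
      intro e he
      simp only [Finset.mem_insert, Finset.mem_singleton] at he
      rcases he with rfl | rfl | rfl | rfl
      · left; simp [E1]
      · left; simp [E2]
      · right; simp [E3]
      · right; simp [E4]
    have t1 := triple E1 E2 E3 d12 d13 d23 g12 g23 gS1
    have t2 := triple E2 E3 E4 d23 d24 d34 g23 g34 gS2
    set T : Finset G.edgeSet := {E1, E2, E3, E4} with hT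
    have hsum : a T E1 + a T E2 + a T E3 + a T E4 = 2 := by
      have := heff T ⟨E1, by simp [hT]⟩
      rw [hT, sum_four _ d12 d13 d14 d23 d24 d34] at this
      rw [← hT] at this
      rw [this, vcGame, gT]; norm_num
    have m2 : a T E2 ≤ 0 := by
      have hsub : ({E1, E2, E3} : Finset G.edgeSet) ⊆ T := by
        intro e he
        simp only [Finset.mem_insert, Finset.mem_singleton] at he
        simp only [hT, Finset.mem_insert, Finset.mem_singleton]
        tauto
      exact le_trans (hmono _ T hsub E2 (by simp)) t1.2
    have m3 : a T E3 ≤ 0 := by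
      have hsub : ({E2, E3, E4} : Finset G.edgeSet) ⊆ T := by
        intro e he
        simp only [Finset.mem_insert, Finset.mem_singleton] at he
        simp only [hT, Finset.mem_insert, Finset.mem_singleton]
        tauto
      exact le_trans (hmono _ T hsub E3 (by simp)) t2.2
    have p14 := pair_le E1 E4 T d14 (by simp [hT]) (by simp [hT]) g14
    linarith
  -- P₅
  · rintro ⟨f, hinj, hadj⟩
    set x0 := f 0; set x1 := f 1; set x2 := f 2; set x3 := f 3; set x4 := f 4
    have p01 : (SimpleGraph.pathGraph 5).Adj 0 1 := by
      rw [SimpleGraph.pathGraph_adj]; decide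
    have p12 : (SimpleGraph.pathGraph 5).Adj 1 2 := by
      rw [SimpleGraph.pathGraph_adj]; decide
    have p23 : (SimpleGraph.pathGraph 5).Adj 2 3 := by
      rw [SimpleGraph.pathGraph_adj]; decide
    have p34 : (SimpleGraph.pathGraph 5).Adj 3 4 := by
      rw [SimpleGraph.pathGraph_adj]; decide
    have h01 : G.Adj x0 x1 := hadj p01
    have h12 : G.Adj x1 x2 := hadj p12
    have h23 : G.Adj x2 x3 := hadj p23
    have h34 : G.Adj x3 x4 := hadj p34
    have n01 : x0 ≠ x1 := hinj.ne (by decide)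
    have n02 : x0 ≠ x2 := hinj.ne (by decide)
    have n03 : x0 ≠ x3 := hinj.ne (by decide)
    have n12 : x1 ≠ x2 := hinj.ne (by decide)
    have n13 : x1 ≠ x3 := hinj.ne (by decide)
    have n14 : x1 ≠ x4 := hinj.ne (by decide)
    have n23 : x2 ≠ x3 := hinj.ne (by decide)
    have n24 : x2 ≠ x4 := hinj.ne (by decide)
    have n34 : x3 ≠ x4 := hinj.ne (by decide)
    set E1 : G.edgeSet := ⟨s(x0, x1), h01⟩
    set E2 : G.edgeSet := ⟨s(x1, x2), h12⟩
    set E3 : G.edgeSet := ⟨s(x2, x3), h23⟩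
    set E4 : G.edgeSet := ⟨s(x3, x4), h34⟩
    have d12 : E1 ≠ E2 := by
      simp only [E1, E2, Ne, Subtype.mk_eq_mk, Subtype.ext_iff, Sym2.eq_iff]; tauto
    have d13 : E1 ≠ E3 := by
      simp only [E1, E3, Ne, Subtype.mk_eq_mk, Subtype.ext_iff, Sym2.eq_iff]; tauto
    have d23 : E2 ≠ E3 := by
      simp only [E2, E3, Ne, Subtype.mk_eq_mk, Subtype.ext_iff, Sym2.eq_iff]; tauto
    have d24 : E2 ≠ E4 := by
      simp only [E2, E4, Ne, Subtype.mk_eq_mk, Subtype.ext_iff, Sym2.eq_iff]; tauto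
    have d34 : E3 ≠ E4 := by
      simp only [E3, E4, Ne, Subtype.mk_eq_mk, Subtype.ext_iff, Sym2.eq_iff]; tauto
    have g12 : vcNum G {E1, E2} = 1 := by
      refine vcNum_eq_one (v := x1) ?_ ⟨E1, by simp⟩
      intro e he
      rcases Finset.mem_insert.mp he with rfl | he
      · simp [E1]
      · rw [Finset.mem_singleton.mp he]; simp [E2]
    have g23 : vcNum G {E2, E3} = 1 := by
      refine vcNum_eq_one (v := x2) ?_ ⟨E2, by simp⟩
      intro e he
      rcases Finset.mem_insert.mp he with rfl | he
      · simp [E2]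
      · rw [Finset.mem_singleton.mp he]; simp [E3]
    have g43 : vcNum G {E4, E3} = 1 := by
      refine vcNum_eq_one (v := x3) ?_ ⟨E4, by simp⟩
      intro e he
      rcases Finset.mem_insert.mp he with rfl | he
      · simp [E4]
      · rw [Finset.mem_singleton.mp he]; simp [E3]
    have g32 : vcNum G {E3, E2} = 1 := by
      refine vcNum_eq_one (v := x2) ?_ ⟨E3, by simp⟩
      intro e he
      rcases Finset.mem_insert.mp he with rfl | he
      · simp [E3]
      · rw [Finset.mem_singleton.mp he]; simp [E2]
    have gS1 : vcNum G {E1, E2, E3} = 2 := by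
      refine vcNum_eq_two (v := x1) (w := x3) ?_ ⟨E1, by simp⟩ ?_
      · intro e he
        simp only [Finset.mem_insert, Finset.mem_singleton] at he
        rcases he with rfl | rfl | rfl
        · left; simp [E1]
        · left; simp [E2]
        · right; simp [E3]
      · -- E1 and E3 disjoint
        intro u
        by_cases h : u ∈ (E1 : Sym2 V)
        · refine ⟨E3, by simp, ?_⟩
          simp only [E1, Sym2.mem_iff] at h
          rcases h with rfl | rfl
          · simp [E3, Sym2.mem_iff]; exact ⟨n02, n03⟩
          · simp [E3, Sym2.mem_iff]; exact ⟨n12, n13⟩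
        · exact ⟨E1, by simp, h⟩
    have gS2 : vcNum G {E4, E3, E2} = 2 := by
      refine vcNum_eq_two (v := x3) (w := x2) ?_ ⟨E4, by simp⟩ ?_
      · intro e he
        simp only [Finset.mem_insert, Finset.mem_singleton] at he
        rcases he with rfl | rfl | rfl
        · left; simp [E4]
        · left; simp [E3]
        · right; simp [E2]
      · -- E4 and E2 disjoint
        intro u
        by_cases h : u ∈ (E4 : Sym2 V)
        · refine ⟨E2, by simp, ?_⟩
          simp only [E4, Sym2.mem_iff] at h
          rcases h with rfl | rfl
          · simp [E2, Sym2.mem_iff, n13, n23, n13.symm, n23.symm]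
          · simp [E2, Sym2.mem_iff, n14, n24, n14.symm, n24.symm]
        · exact ⟨E4, by simp, h⟩
    have t1 := triple E1 E2 E3 d12 d13 d23 g12 g23 gS1
    have t2 := triple E4 E3 E2 d34.symm d24.symm d23.symm g43 g32 gS2
    -- a_{S1} E3 ≥ 1, a_{S2} E2 ≥ 1; restrict to P = {E2, E3}
    set P : Finset G.edgeSet := {E2, E3} with hP
    have hsub1 : P ⊆ ({E1, E2, E3} : Finset G.edgeSet) := by
      intro e he
      simp only [hP, Finset.mem_insert, Finset.mem_singleton] at he
      simp only [Finset.mem_insert, Finset.mem_singleton]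
      tauto
    have hsub2 : P ⊆ ({E4, E3, E2} : Finset G.edgeSet) := by
      intro e he
      simp only [hP, Finset.mem_insert, Finset.mem_singleton] at he
      simp only [Finset.mem_insert, Finset.mem_singleton]
      tauto
    have m3 : 1 ≤ a P E3 :=
      le_trans t1.1 (hmono P _ hsub1 E3 (by simp [hP]))
    have m2 : 1 ≤ a P E2 :=
      le_trans t2.1 (hmono P _ hsub2 E2 (by simp [hP]))
    have hsum : a P E2 + a P E3 = 1 := by
      have := heff P ⟨E2, by simp [hP]⟩
      rw [hP, Finset.sum_pair d23] at this
      rw [← hP] at this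
      rw [this, vcGame, g23]; norm_num
    linarith
end

section
/- If G is a graph in which every connected component is a tree of diameter at most 3, then the vertex cover game on G admits a population monotonic allocation scheme. Explicitly, fixing for each component its set of non-pendant vertices (the center of a star, or the two bases of a pisces) as a canonical minimum vertex cover, the allocation assigning to each coalition S: 0 to a free rider incident to other edges of S, 1 to a free rider not incident to other edges of S, and 1/λ_S(i) to every other edge i (where λ_S(i) is the number of non-free-rider edges of S incident to the canonical cover vertex covering i), is a PMAS. -/
attribute [local instance] Classical.propDecidable

/-- A vertex is pendant if it has degree one. -/
def Pendant {V : Type*} [Fintype V] (G : SimpleGraph V) [DecidableRel G.Adj] (v : V) : Prop :=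
  G.degree v = 1

/-- A free rider is an edge none of whose endpoints is pendant (in a graph whose
components are trees of diameter at most 3, this is exactly the unique non-pendant
edge of a diameter-3 component). -/
def FreeRider {V : Type*} [Fintype V] (G : SimpleGraph V) [DecidableRel G.Adj]
    (e : G.edgeSet) : Prop :=
  ∀ v ∈ (e : Sym2 V), ¬ Pendant G v

/-- `λ_S(i)`: the number of non-free-rider edges of `S` incident to the canonical
cover vertex `c i` covering `i`. -/
noncomputable def lamVC {V : Type*} [Fintype V] (G : SimpleGraph V) [DecidableRel G.Adj]
    (c : G.edgeSet → V) (S : Finset G.edgeSet) (i : G.edgeSet) : ℕ :=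
  (S.filter (fun j => ¬ FreeRider G j ∧ c i ∈ (j : Sym2 V))).card

/-- The explicit allocation: `0` to a free rider incident to other edges of `S`,
`1` to a free rider not incident to other edges of `S`, and `1/λ_S(i)` to any
other edge `i`. -/
noncomputable def vcAlloc {V : Type*} [Fintype V] (G : SimpleGraph V) [DecidableRel G.Adj]
    (c : G.edgeSet → V) (S : Finset G.edgeSet) (i : G.edgeSet) : ℝ :=
  if FreeRider G i then
    (if ∃ j ∈ S, j ≠ i ∧ ∃ v : V, v ∈ (i : Sym2 V) ∧ v ∈ (j : Sym2 V) then 0 else 1)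
  else (lamVC G c S i : ℝ)⁻¹

section Helpers

variable {V : Type*} [Fintype V] (G : SimpleGraph V) [DecidableRel G.Adj]

/-- Given an edge and an endpoint, extract the other endpoint. -/
lemma edge_other {v : V} (e : G.edgeSet) (hv : v ∈ (e : Sym2 V)) :
    ∃ w : V, G.Adj v w ∧ (e : Sym2 V) = s(v, w) := by
  classical
  refine ⟨Sym2.Mem.other' hv, ?_, (Sym2.other_spec' hv).symm⟩
  have := Sym2.other_spec' hv
  have he : (e : Sym2 V) ∈ G.edgeSet := e.2
  rw [← this] at he
  exact G.mem_edgeSet.mp he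

/-- A pendant vertex lies in at most one edge. -/
lemma pendant_unique_edge {v : V} (hp : Pendant G v) (e f : G.edgeSet)
    (he : v ∈ (e : Sym2 V)) (hf : v ∈ (f : Sym2 V)) : e = f := by
  obtain ⟨w1, ha1, hs1⟩ := edge_other G e he
  obtain ⟨w2, ha2, hs2⟩ := edge_other G f hf
  have hm1 : w1 ∈ G.neighborFinset v := by simpa using ha1
  have hm2 : w2 ∈ G.neighborFinset v := by simpa using ha2
  have hcard : (G.neighborFinset v).card = 1 := by
    simpa [Pendant, SimpleGraph.card_neighborFinset_eq_degree] using hp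
  have : w1 = w2 := Finset.card_le_one.mp (le_of_eq hcard) _ hm1 _ hm2
  apply Subtype.ext
  rw [hs1, hs2, this]

/-- A non-pendant vertex adjacent to something has a neighbor avoiding any given vertex. -/
lemma exists_other_neighbor {v w : V} (hp : ¬ Pendant G v) (ha : G.Adj v w) :
    ∃ u : V, G.Adj v u ∧ u ≠ w := by
  have hm : w ∈ G.neighborFinset v := by simpa using ha
  have h1 : 1 ≤ (G.neighborFinset v).card := Finset.card_pos.mpr ⟨w, hm⟩
  have h2 : 1 < (G.neighborFinset v).card := by
    rcases lt_or_eq_of_le h1 with h | h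
    · exact h
    · exact absurd (by simpa [Pendant, SimpleGraph.card_neighborFinset_eq_degree] using h.symm) hp
  obtain ⟨u, hu, hne⟩ := Finset.exists_mem_ne h2 w
  exact ⟨u, by simpa using hu, hne⟩

end Helpers

section Key

variable {V : Type*} [Fintype V] (G : SimpleGraph V) [DecidableRel G.Adj]

set_option linter.unusedSectionVars false

/-- In an acyclic graph of diameter at most 3, no two distinct free riders share a vertex. -/
lemma no_adjacent_freeriders (hacyc : G.IsAcyclic)
    (hdiam : ∀ u v : V, G.Reachable u v → G.dist u v ≤ 3)
    {e f : G.edgeSet} (hne : e ≠ f) (he : FreeRider G e) (hf : FreeRider G f)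
    {v : V} (hve : v ∈ (e : Sym2 V)) (hvf : v ∈ (f : Sym2 V)) : False := by
  have hpu := SimpleGraph.isAcyclic_iff_path_unique.mp hacyc
  obtain ⟨u, hau, hse⟩ := edge_other G e hve
  obtain ⟨w, haw, hsf⟩ := edge_other G f hvf
  have huw : u ≠ w := by
    intro h; exact hne (Subtype.ext (by rw [hse, hsf, h]))
  have hu_np : ¬ Pendant G u := he u (by rw [hse]; simp)
  have hw_np : ¬ Pendant G w := hf w (by rw [hsf]; simp)
  obtain ⟨u', hau', hu'v⟩ := exists_other_neighbor G hu_np hau.symm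
  obtain ⟨w', haw', hw'v⟩ := exists_other_neighbor G hw_np haw.symm
  -- basic distinctness
  have hvu : v ≠ u := hau.ne
  have hvw : v ≠ w := haw.ne
  have hu'u : u' ≠ u := hau'.ne'
  have hw'w : w' ≠ w := haw'.ne'
  -- u' ≠ w : else triangle v-u-w
  have hu'w : u' ≠ w := by
    intro h
    subst h
    have heq := hpu (SimpleGraph.Path.singleton haw)
      ⟨SimpleGraph.Walk.cons hau (SimpleGraph.Walk.cons hau' SimpleGraph.Walk.nil), by
        simp [SimpleGraph.Walk.isPath_def, hvu, hvu.symm, hvw, hvw.symm, hu'u, hu'u.symm]⟩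
    have hl := congrArg (fun p : G.Path v u' => (p.val).length) heq
    simp [SimpleGraph.Path.singleton] at hl
  -- w' ≠ u : else triangle v-w-u
  have hw'u : w' ≠ u := by
    intro h
    subst h
    have heq := hpu (SimpleGraph.Path.singleton hau)
      ⟨SimpleGraph.Walk.cons haw (SimpleGraph.Walk.cons haw' SimpleGraph.Walk.nil), by
        simp [SimpleGraph.Walk.isPath_def, hvu, hvu.symm, hvw, hvw.symm, hw'w, hw'w.symm]⟩
    have hl := congrArg (fun p : G.Path v w' => (p.val).length) heq
    simp [SimpleGraph.Path.singleton] at hl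
  -- u' ≠ w' : else 4-cycle
  have hu'w' : u' ≠ w' := by
    intro h
    subst h
    have heq := hpu (SimpleGraph.Path.singleton hau')
      ⟨SimpleGraph.Walk.cons hau.symm (SimpleGraph.Walk.cons haw
          (SimpleGraph.Walk.cons haw' SimpleGraph.Walk.nil)), by
        simp [SimpleGraph.Walk.isPath_def, hvu, hvu.symm, hvw, hvw.symm, huw, huw.symm,
          hu'u, hu'u.symm, hu'v, hu'v.symm, hu'w, hu'w.symm, hw'w, hw'w.symm]⟩
    have hl := congrArg (fun p : G.Path u u' => (p.val).length) heq
    simp [SimpleGraph.Path.singleton] at hl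
  -- the length-4 path u' - u - v - w - w'
  have hP : (SimpleGraph.Walk.cons hau'.symm (SimpleGraph.Walk.cons hau.symm
      (SimpleGraph.Walk.cons haw (SimpleGraph.Walk.cons haw'
        SimpleGraph.Walk.nil)))).IsPath := by
    simp [SimpleGraph.Walk.isPath_def, hu'u, hu'u.symm, hu'v, hu'v.symm, hu'w, hu'w.symm,
      hu'w', hu'w'.symm, hvu, hvu.symm, huw, huw.symm, hw'u, hw'u.symm, hvw, hvw.symm,
      hw'v, hw'v.symm, hw'w, hw'w.symm]
  have hreach : G.Reachable u' w' := ⟨SimpleGraph.Walk.cons hau'.symm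
    (SimpleGraph.Walk.cons hau.symm (SimpleGraph.Walk.cons haw
      (SimpleGraph.Walk.cons haw' SimpleGraph.Walk.nil)))⟩
  obtain ⟨Q, hQ⟩ := hreach.exists_walk_length_eq_dist
  have hQ3 : Q.length ≤ 3 := by rw [hQ]; exact hdiam _ _ hreach
  have hTP : (Q.toPath : G.Walk u' w').length ≤ 3 :=
    le_trans (SimpleGraph.Walk.length_bypass_le Q) hQ3
  have heq := hpu (⟨_, hP⟩ : G.Path u' w') Q.toPath
  have hl := congrArg (fun p : G.Path u' w' => (p.val).length) heq
  simp only at hl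
  rw [← hl] at hTP
  simp at hTP

end Key

section CLemma

variable {V : Type*} [Fintype V] (G : SimpleGraph V) [DecidableRel G.Adj]
  (c : G.edgeSet → V)
  (hc1 : ∀ i : G.edgeSet, c i ∈ (i : Sym2 V))
  (hc2 : ∀ i : G.edgeSet, Pendant G (c i) → ∀ v ∈ (i : Sym2 V), Pendant G v)

set_option linter.unusedSectionVars false

include hc1 hc2 in
/-- A non-free-rider edge containing a non-pendant vertex has that vertex as its cover. -/
lemma c_eq_of_nonpendant {e : G.edgeSet} (hfr : ¬ FreeRider G e) {v : V}
    (hv : v ∈ (e : Sym2 V)) (hnp : ¬ Pendant G v) : c e = v := by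
  obtain ⟨w, haw, hs⟩ := edge_other G e hv
  have hce := hc1 e
  rw [hs, Sym2.mem_iff] at hce
  rcases hce with h | h
  · exact h
  · -- c e = w; then w must be non-pendant else hc2 forces v pendant; but then e is FR
    by_cases hw : Pendant G w
    · exact absurd (hc2 e (by rw [h]; exact hw) v hv) hnp
    · exfalso
      apply hfr
      intro x hx
      rw [hs, Sym2.mem_iff] at hx
      rcases hx with rfl | rfl
      · exact hnp
      · exact hw

end CLemma

/-- If every component of `G` is a tree of diameter at most `3`, then the vertex
cover game on `G` admits a PMAS; explicitly, for any choice `c` assigning to each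
edge an endpoint which is non-pendant unless all endpoints of the edge are pendant
(i.e. the canonical minimum vertex cover made of centers of stars and bases of
pisceses), the allocation `vcAlloc G c` is a PMAS. -/
theorem components_trees_diam_le_three_pmas {V : Type*} [Fintype V]
    (G : SimpleGraph V) [DecidableRel G.Adj]
    (hacyc : G.IsAcyclic) (hdiam : ∀ u v : V, G.Reachable u v → G.dist u v ≤ 3)
    (c : G.edgeSet → V)
    (hc1 : ∀ i : G.edgeSet, c i ∈ (i : Sym2 V))
    (hc2 : ∀ i : G.edgeSet, Pendant G (c i) → ∀ v ∈ (i : Sym2 V), Pendant G v) :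
    IsPMAS (vcGame G) (vcAlloc G c) := by
  classical
  constructor
  · -- efficiency
    intro S hS
    set N : Finset G.edgeSet := S.filter (fun i => ¬ FreeRider G i) with hN
    set A : Finset V := N.image c with hA
    set B : Finset G.edgeSet := S.filter (fun i => FreeRider G i ∧
      ¬ ∃ j ∈ S, j ≠ i ∧ ∃ v : V, v ∈ (i : Sym2 V) ∧ v ∈ (j : Sym2 V)) with hB
    -- Step 1: the sum equals A.card + B.card
    have hsum : ∑ i ∈ S, vcAlloc G c S i = (A.card : ℝ) + (B.card : ℝ) := by
      have hsplit : ∑ i ∈ S, vcAlloc G c S i =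
          ∑ i ∈ S.filter (fun i => FreeRider G i), vcAlloc G c S i +
          ∑ i ∈ S.filter (fun i => ¬ FreeRider G i), vcAlloc G c S i :=
        (Finset.sum_filter_add_sum_filter_not S _ _).symm
      have hFsum : ∑ i ∈ S.filter (fun i => FreeRider G i), vcAlloc G c S i = (B.card : ℝ) := by
        have h1 : ∀ i ∈ S.filter (fun i => FreeRider G i), vcAlloc G c S i =
            (if ¬ ∃ j ∈ S, j ≠ i ∧ ∃ v : V, v ∈ (i : Sym2 V) ∧ v ∈ (j : Sym2 V)
              then (1:ℝ) else 0) := by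
          intro i hi
          rw [Finset.mem_filter] at hi
          unfold vcAlloc
          rw [if_pos hi.2]
          by_cases h : ∃ j ∈ S, j ≠ i ∧ ∃ v : V, v ∈ (i : Sym2 V) ∧ v ∈ (j : Sym2 V) <;>
            simp [h]
        rw [Finset.sum_congr rfl h1, Finset.sum_boole, hB, Finset.filter_filter]
      have hmaps : ∀ i ∈ S.filter (fun i => ¬ FreeRider G i), c i ∈ A :=
        fun i hi => Finset.mem_image_of_mem c hi
      have hfib : ∀ a ∈ A, ∀ i ∈ N.filter (fun i => c i = a),
          S.filter (fun j => ¬ FreeRider G j ∧ c i ∈ (j : Sym2 V)) =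
          N.filter (fun i => c i = a) := by
        intro a ha i hi
        rw [Finset.mem_filter] at hi
        obtain ⟨hiN, hcia⟩ := hi
        rw [hN, Finset.mem_filter] at hiN
        ext j
        simp only [Finset.mem_filter, hN]
        constructor
        · rintro ⟨hjS, hnfrj, hmem⟩
          rw [hcia] at hmem
          refine ⟨⟨hjS, hnfrj⟩, ?_⟩
          by_cases hp : Pendant G a
          · have hai : a ∈ (i : Sym2 V) := hcia ▸ hc1 i
            have := pendant_unique_edge G hp i j hai hmem
            rw [← this, hcia]
          · exact c_eq_of_nonpendant G c hc1 hc2 hnfrj hmem hp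
        · rintro ⟨⟨hjS, hnfrj⟩, hcj⟩
          exact ⟨hjS, hnfrj, by rw [hcia, ← hcj]; exact hc1 j⟩
      have hone : ∀ a ∈ A, ∑ i ∈ N.filter (fun i => c i = a), vcAlloc G c S i = 1 := by
        intro a ha
        have hNa : (N.filter (fun i => c i = a)).Nonempty := by
          rw [hA] at ha
          obtain ⟨i, hi, rfl⟩ := Finset.mem_image.mp ha
          exact ⟨i, Finset.mem_filter.mpr ⟨hi, rfl⟩⟩
        have h2 : ∀ i ∈ N.filter (fun i => c i = a), vcAlloc G c S i =
            ((N.filter (fun i => c i = a)).card : ℝ)⁻¹ := by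
          intro i hi
          have hiN := (Finset.mem_filter.mp hi).1
          have hnfr : ¬ FreeRider G i := (Finset.mem_filter.mp hiN).2
          unfold vcAlloc
          rw [if_neg hnfr]
          unfold lamVC
          rw [hfib a ha i hi]
        rw [Finset.sum_congr rfl h2, Finset.sum_const, nsmul_eq_mul]
        rw [mul_inv_cancel₀]
        exact_mod_cast Finset.card_ne_zero_of_mem hNa.choose_spec
      have hNsum : ∑ i ∈ S.filter (fun i => ¬ FreeRider G i), vcAlloc G c S i = (A.card : ℝ) := by
        rw [← Finset.sum_fiberwise_of_maps_to hmaps (vcAlloc G c S)]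
        have : ∀ a ∈ A, ∑ i ∈ (S.filter (fun i => ¬ FreeRider G i)).filter (fun i => c i = a),
            vcAlloc G c S i = 1 := by
          intro a ha
          rw [← hN]
          exact hone a ha
        rw [Finset.sum_congr rfl this, Finset.sum_const, nsmul_eq_mul, mul_one]
      rw [hsplit, hFsum, hNsum]
      ring
    -- Step 2: vcNum equals A.card + B.card
    have hnum : vcNum G S = A.card + B.card := by
      set C₀ : Finset V := A ∪ B.image c with hC₀
      have hcov₀ : IsVertexCoverOf G C₀ S := by
        intro e heS
        by_cases hfr : FreeRider G e
        · by_cases hP : ∃ j ∈ S, j ≠ e ∧ ∃ v : V, v ∈ (e : Sym2 V) ∧ v ∈ (j : Sym2 V)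
          · obtain ⟨j, hjS, hje, v, hve, hvj⟩ := hP
            have hnfrj : ¬ FreeRider G j := fun h =>
              no_adjacent_freeriders G hacyc hdiam hje.symm hfr h hve hvj
            have hvnp : ¬ Pendant G v := hfr v hve
            have hcj : c j = v := c_eq_of_nonpendant G c hc1 hc2 hnfrj hvj hvnp
            refine ⟨v, Finset.mem_union_left _ ?_, hve⟩
            rw [hA]
            exact Finset.mem_image.mpr ⟨j, Finset.mem_filter.mpr ⟨hjS, hnfrj⟩, hcj⟩
          · refine ⟨c e, Finset.mem_union_right _ ?_, hc1 e⟩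
            exact Finset.mem_image_of_mem c (Finset.mem_filter.mpr ⟨heS, hfr, hP⟩)
        · exact ⟨c e, Finset.mem_union_left _
            (Finset.mem_image_of_mem c (Finset.mem_filter.mpr ⟨heS, hfr⟩)), hc1 e⟩
      have hub : vcNum G S ≤ A.card + B.card := by
        calc vcNum G S ≤ C₀.card := Nat.sInf_le ⟨C₀, hcov₀, rfl⟩
          _ ≤ A.card + (B.image c).card := Finset.card_union_le _ _
          _ ≤ A.card + B.card := Nat.add_le_add_left Finset.card_image_le _
      have hlb : ∀ C : Finset V, IsVertexCoverOf G C S → A.card + B.card ≤ C.card := by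
        intro C hC
        obtain ⟨e₀, he₀⟩ := hS
        have hw : ∀ a ∈ A, ∃ i, i ∈ N ∧ c i = a := by
          intro a ha
          rw [hA] at ha
          obtain ⟨i, hi, rfl⟩ := Finset.mem_image.mp ha
          exact ⟨i, hi, rfl⟩
        set w : V → G.edgeSet := fun a =>
          if h : ∃ i, i ∈ N ∧ c i = a then h.choose else e₀ with hwdef
        have hwN : ∀ a ∈ A, w a ∈ N := by
          intro a ha
          have h := hw a ha
          rw [hwdef]
          simp only [dif_pos h]
          exact h.choose_spec.1
        have hwc : ∀ a ∈ A, c (w a) = a := by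
          intro a ha
          have h := hw a ha
          rw [hwdef]
          simp only [dif_pos h]
          exact h.choose_spec.2
        set M : Finset G.edgeSet := A.image w ∪ B with hM
        have hMS : M ⊆ S := by
          intro x hx
          rw [hM, Finset.mem_union] at hx
          rcases hx with hx | hx
          · obtain ⟨a, ha, rfl⟩ := Finset.mem_image.mp hx
            have := hwN a ha
            rw [hN] at this
            exact Finset.mem_of_mem_filter _ this
          · rw [hB] at hx
            exact Finset.mem_of_mem_filter _ hx
        have hdisj : Disjoint (A.image w) B := by
          rw [Finset.disjoint_left]
          intro x hx hxB
          obtain ⟨a, ha, rfl⟩ := Finset.mem_image.mp hx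
          have h1 := hwN a ha
          rw [hN, Finset.mem_filter] at h1
          rw [hB, Finset.mem_filter] at hxB
          exact h1.2 hxB.2.1
        have hcardM : M.card = A.card + B.card := by
          rw [hM, Finset.card_union_of_disjoint hdisj, Finset.card_image_of_injOn]
          intro a ha b hb hab
          rw [← hwc a ha, ← hwc b hb, hab]
        -- a B-element shares no vertex with any other element of S
        have hBsep : ∀ x, x ∈ B → ∀ y ∈ S, y ≠ x →
            ∀ v : V, v ∈ (x : Sym2 V) → v ∈ (y : Sym2 V) → False := by
          intro x hx y hy hyx v hvx hvy
          rw [hB, Finset.mem_filter] at hx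
          exact hx.2.2 ⟨y, hy, hyx, v, hvx, hvy⟩
        have hsep : ∀ x ∈ M, ∀ y ∈ M, x ≠ y →
            ∀ v : V, v ∈ (x : Sym2 V) → v ∈ (y : Sym2 V) → False := by
          intro x hxM y hyM hxy v hvx hvy
          have hxM' := hxM
          have hyM' := hyM
          rw [hM, Finset.mem_union] at hxM' hyM'
          rcases hxM' with hxI | hxB
          · rcases hyM' with hyI | hyB
            · obtain ⟨a, ha, rfl⟩ := Finset.mem_image.mp hxI
              obtain ⟨b, hb, rfl⟩ := Finset.mem_image.mp hyI
              have hna := hwN a ha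
              have hnb := hwN b hb
              rw [hN, Finset.mem_filter] at hna hnb
              by_cases hp : Pendant G v
              · exact hxy (pendant_unique_edge G hp _ _ hvx hvy)
              · have h1 : c (w a) = v := c_eq_of_nonpendant G c hc1 hc2 hna.2 hvx hp
                have h2 : c (w b) = v := c_eq_of_nonpendant G c hc1 hc2 hnb.2 hvy hp
                apply hxy
                have hab : a = b := by rw [← hwc a ha, ← hwc b hb, h1, h2]
                rw [hab]
            · exact hBsep y hyB x (hMS hxM) hxy v hvy hvx
          · exact hBsep x hxB y (hMS hyM) (Ne.symm hxy) v hvx hvy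
        have hchoice : ∀ x ∈ M, ∃ v, v ∈ C ∧ v ∈ (x : Sym2 V) := by
          intro x hx
          obtain ⟨v, h1, h2⟩ := hC x (hMS hx)
          exact ⟨v, h1, h2⟩
        set σ : G.edgeSet → V := fun x =>
          if h : ∃ v, v ∈ C ∧ v ∈ (x : Sym2 V) then h.choose else c x with hσdef
        have hσC : ∀ x ∈ M, σ x ∈ C := by
          intro x hx
          have h := hchoice x hx
          rw [hσdef]
          simp only [dif_pos h]
          exact h.choose_spec.1
        have hσmem : ∀ x ∈ M, σ x ∈ (x : Sym2 V) := by
          intro x hx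
          have h := hchoice x hx
          rw [hσdef]
          simp only [dif_pos h]
          exact h.choose_spec.2
        have hinj : Set.InjOn σ ↑M := by
          intro x hx y hy hxy2
          rw [Finset.mem_coe] at hx hy
          by_contra hne2
          exact hsep x hx y hy hne2 (σ x) (hσmem x hx) (hxy2 ▸ hσmem y hy)
        calc A.card + B.card = M.card := hcardM.symm
          _ ≤ C.card := Finset.card_le_card_of_injOn σ hσC hinj
      have hmem := Nat.sInf_mem (⟨C₀.card, C₀, hcov₀, rfl⟩ :
        {n | ∃ C : Finset V, IsVertexCoverOf G C S ∧ C.card = n}.Nonempty)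
      obtain ⟨C, hCcov, hCcard⟩ := hmem
      refine le_antisymm hub ?_
      have := hlb C hCcov
      unfold vcNum
      omega
    rw [hsum]
    unfold vcGame
    rw [hnum]
    push_cast
    ring
  · -- monotonicity
    intro S T hST i hiS
    unfold vcAlloc
    by_cases hfr : FreeRider G i
    · simp only [if_pos hfr]
      by_cases hTj : ∃ j ∈ T, j ≠ i ∧ ∃ v : V, v ∈ (i : Sym2 V) ∧ v ∈ (j : Sym2 V)
      · rw [if_pos hTj]
        split_ifs <;> norm_num
      · have hSj : ¬ ∃ j ∈ S, j ≠ i ∧ ∃ v : V, v ∈ (i : Sym2 V) ∧ v ∈ (j : Sym2 V) := by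
          intro h
          obtain ⟨j, hj, hji, hv⟩ := h
          exact hTj ⟨j, hST hj, hji, hv⟩
        rw [if_neg hTj, if_neg hSj]
    · simp only [if_neg hfr]
      have hpos : 0 < lamVC G c S i := by
        apply Finset.card_pos.mpr
        exact ⟨i, Finset.mem_filter.mpr ⟨hiS, hfr, hc1 i⟩⟩
      have hle : lamVC G c S i ≤ lamVC G c T i := by
        apply Finset.card_le_card
        intro j hj
        rw [Finset.mem_filter] at hj ⊢
        exact ⟨hST hj.1, hj.2⟩
      apply inv_anti₀
      · exact_mod_cast hpos
      · exact_mod_cast hle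
end

section
/- The vertex cover game Γ_G on a graph G is population monotonic (admits a PMAS) if and only if G contains no subgraph isomorphic to K_3, C_4, or P_5. -/
namespace VCAux


open Finset
open scoped Classical

variable {V : Type*} {G : SimpleGraph V} {S : Finset G.edgeSet}

lemma cover_set_nonempty (S : Finset G.edgeSet) :
    {n | ∃ C : Finset V, IsVertexCoverOf G C S ∧ C.card = n}.Nonempty := by
  classical
  refine ⟨_, S.image (fun e : G.edgeSet => ((e : Sym2 V)).out.1), fun e he => ?_, rfl⟩
  exact ⟨(e : Sym2 V).out.1, Finset.mem_image_of_mem _ he, Sym2.out_fst_mem _⟩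

lemma vcNum_le {C : Finset V} (h : IsVertexCoverOf G C S) : vcNum G S ≤ C.card :=
  Nat.sInf_le ⟨C, h, rfl⟩

lemma vcNum_spec (S : Finset G.edgeSet) :
    ∃ C : Finset V, IsVertexCoverOf G C S ∧ C.card = vcNum G S :=
  Nat.sInf_mem (cover_set_nonempty S)

lemma one_le_vcNum (hS : S.Nonempty) : 1 ≤ vcNum G S := by
  obtain ⟨C, hC, hcard⟩ := vcNum_spec (G := G) S
  obtain ⟨e, he⟩ := hS
  obtain ⟨v, hv, -⟩ := hC e he
  have : 0 < C.card := Finset.card_pos.2 ⟨v, hv⟩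
  omega

lemma vcNum_eq_one (hS : S.Nonempty) (v : V) (hv : ∀ e ∈ S, v ∈ (e : Sym2 V)) :
    vcNum G S = 1 := by
  have h1 : vcNum G S ≤ 1 := by
    have := vcNum_le (C := {v}) (S := S) (fun e he => ⟨v, Finset.mem_singleton_self v, hv e he⟩)
    simpa using this
  exact le_antisymm h1 (one_le_vcNum hS)

lemma two_le_vcNum_of_no_single (hS : S.Nonempty)
    (h : ∀ v : V, ∃ e ∈ S, v ∉ (e : Sym2 V)) : 2 ≤ vcNum G S := by
  obtain ⟨C, hC, hcard⟩ := vcNum_spec (G := G) S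
  rcases Nat.lt_or_ge (vcNum G S) 2 with hlt | hge
  · exfalso
    have h1 := one_le_vcNum hS
    have hc1 : C.card = 1 := by omega
    obtain ⟨v, hv⟩ := Finset.card_eq_one.1 hc1
    obtain ⟨e, he, hve⟩ := h v
    obtain ⟨w, hw, hwe⟩ := hC e he
    rw [hv, Finset.mem_singleton] at hw
    exact hve (hw ▸ hwe)
  · exact hge

lemma vcNum_eq_two' (hS : S.Nonempty)
    (h : ∀ v : V, ∃ e ∈ S, v ∉ (e : Sym2 V))
    (v w : V) (hvw : ∀ g ∈ S, v ∈ (g : Sym2 V) ∨ w ∈ (g : Sym2 V)) :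
    vcNum G S = 2 := by
  classical
  refine le_antisymm ?_ (two_le_vcNum_of_no_single hS h)
  calc vcNum G S ≤ ({v, w} : Finset V).card := by
        refine vcNum_le (fun g hg => ?_)
        rcases hvw g hg with h | h
        · exact ⟨v, by simp, h⟩
        · exact ⟨w, by simp, h⟩
    _ ≤ 2 := Finset.card_insert_le _ _ |>.trans (by simp)


lemma sym2_ne {a b c d : V} (h1 : a ≠ c) (h2 : a ≠ d) : s(a, b) ≠ s(c, d) := by
  simp only [ne_eq, Sym2.eq_iff]
  push_neg
  exact ⟨fun h => absurd h h1, fun h => absurd h h2⟩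

lemma edge_mk_ne {a b c d : V} (hab : G.Adj a b) (hcd : G.Adj c d)
    (h : ¬(a = c ∧ b = d) ∧ ¬(a = d ∧ b = c)) :
    (⟨s(a, b), G.mem_edgeSet.2 hab⟩ : G.edgeSet) ≠ ⟨s(c, d), G.mem_edgeSet.2 hcd⟩ := by
  intro hh
  have := congrArg Subtype.val hh
  simp only [Sym2.eq_iff] at this
  tauto

lemma sym2_disj {a b c d : V} (h1 : a ≠ c) (h2 : a ≠ d) (h3 : b ≠ c) (h4 : b ≠ d) :
    ∀ v : V, v ∈ s(a, b) → v ∉ s(c, d) := by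
  intro v hv hv'
  rw [Sym2.mem_iff] at hv hv'
  rcases hv with rfl | rfl <;> rcases hv' with rfl | rfl <;> simp_all

lemma two_le_vcNum {e f : G.edgeSet} (he : e ∈ S) (hf : f ∈ S)
    (hdisj : ∀ v : V, v ∈ (e : Sym2 V) → v ∉ (f : Sym2 V)) : 2 ≤ vcNum G S := by
  classical
  obtain ⟨C, hC, hcard⟩ := vcNum_spec (G := G) S
  obtain ⟨v, hv, hve⟩ := hC e he
  obtain ⟨w, hw, hwf⟩ := hC f hf
  have hvw : v ≠ w := fun h => hdisj v hve (h ▸ hwf)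
  have hsub : ({v, w} : Finset V) ⊆ C := by
    intro x hx
    rcases Finset.mem_insert.1 hx with h | h
    · exact h ▸ hv
    · exact (Finset.mem_singleton.1 h) ▸ hw
  have h2 : ({v, w} : Finset V).card = 2 := Finset.card_pair hvw
  have := Finset.card_le_card hsub
  omega

lemma vcNum_eq_two {e f : G.edgeSet} (he : e ∈ S) (hf : f ∈ S)
    (hdisj : ∀ v : V, v ∈ (e : Sym2 V) → v ∉ (f : Sym2 V))
    (v w : V) (hvw : ∀ g ∈ S, v ∈ (g : Sym2 V) ∨ w ∈ (g : Sym2 V)) :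
    vcNum G S = 2 := by
  classical
  refine le_antisymm ?_ (two_le_vcNum he hf hdisj)
  calc vcNum G S ≤ ({v, w} : Finset V).card := by
        refine vcNum_le (fun g hg => ?_)
        rcases hvw g hg with h | h
        · exact ⟨v, by simp, h⟩
        · exact ⟨w, by simp, h⟩
    _ ≤ 2 := Finset.card_insert_le _ _ |>.trans (by simp)

section PMAS

variable {a : Finset G.edgeSet → G.edgeSet → ℝ}

lemma pmas_subset_sum_le (h : IsPMAS (vcGame G) a) {S T : Finset G.edgeSet}
    (hST : S ⊆ T) (hS : S.Nonempty) : ∑ i ∈ S, a T i ≤ (vcNum G S : ℝ) := by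
  calc ∑ i ∈ S, a T i ≤ ∑ i ∈ S, a S i := Finset.sum_le_sum (fun i hi => h.2 S T hST i hi)
    _ = vcGame G S := h.1 S hS

lemma sum_pair' (f : G.edgeSet → ℝ) {p q : G.edgeSet} (hpq : p ≠ q) :
    ∑ i ∈ ({p, q} : Finset G.edgeSet), f i = f p + f q := Finset.sum_pair hpq

lemma sum_triple (f : G.edgeSet → ℝ) {p q r : G.edgeSet} (hpq : p ≠ q) (hpr : p ≠ r)
    (hqr : q ≠ r) :
    ∑ i ∈ ({p, q, r} : Finset G.edgeSet), f i = f p + f q + f r := by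
  rw [Finset.sum_insert (by simp [hpq, hpr]), Finset.sum_pair hqr, add_assoc]

lemma pmas_pair_le (h : IsPMAS (vcGame G) a) {p q : G.edgeSet} {T : Finset G.edgeSet}
    (hpq : p ≠ q) (hp : p ∈ T) (hq : q ∈ T) (h1 : vcNum G {p, q} = 1) :
    a T p + a T q ≤ 1 := by
  have := pmas_subset_sum_le h (S := {p, q}) (T := T)
    (by intro x hx; rcases Finset.mem_insert.1 hx with h | h
        · exact h ▸ hp
        · exact (Finset.mem_singleton.1 h) ▸ hq) ⟨p, by simp⟩
  rw [sum_pair' _ hpq, h1] at this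
  simpa using this

lemma pmas_single_le (h : IsPMAS (vcGame G) a) {p : G.edgeSet} {T : Finset G.edgeSet}
    (hp : p ∈ T) (h1 : vcNum G {p} = 1) : a T p ≤ 1 := by
  have := pmas_subset_sum_le h (S := {p}) (T := T) (by simpa using hp) ⟨p, by simp⟩
  rw [Finset.sum_singleton, h1] at this
  simpa using this

lemma pmas_mid (h : IsPMAS (vcGame G) a) {p q r : G.edgeSet}
    (hpq : p ≠ q) (hpr : p ≠ r) (hqr : q ≠ r)
    (h1 : vcNum G {p, q} = 1) (h2 : vcNum G {q, r} = 1) (h3 : vcNum G {p, q, r} = 2) :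
    a {p, q, r} q ≤ 0 := by
  set T : Finset G.edgeSet := {p, q, r} with hT
  have heff : a T p + a T q + a T r = 2 := by
    have := h.1 T ⟨p, by simp [hT]⟩
    rw [hT] at this ⊢
    rw [sum_triple _ hpq hpr hqr] at this
    rw [this, vcGame, h3]; norm_num
  have hp' : p ∈ T := by simp [hT]
  have hq' : q ∈ T := by simp [hT]
  have hr' : r ∈ T := by simp [hT]
  have s1 : a T p + a T q ≤ 1 := pmas_pair_le h hpq hp' hq' h1
  have s2 : a T q + a T r ≤ 1 := pmas_pair_le h hqr hq' hr' h2
  linarith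

end PMAS

section Forbidden

variable {a : Finset G.edgeSet → G.edgeSet → ℝ}

lemma no_pmas_K3 (h : IsPMAS (vcGame G) a)
    (hc : ContainsSubgraph (⊤ : SimpleGraph (Fin 3)) G) : False := by
  obtain ⟨f, hinj, hadj⟩ := hc
  have hxy : G.Adj (f 0) (f 1) := hadj (by simp)
  have hyz : G.Adj (f 1) (f 2) := hadj (by simp)
  have hxz : G.Adj (f 0) (f 2) := hadj (by simp)
  set x := f 0 with hx0
  set y := f 1 with hy0
  set z := f 2 with hz0
  have hxyne : x ≠ y := hxy.ne
  have hyzne : y ≠ z := hyz.ne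
  have hxzne : x ≠ z := hxz.ne
  set Exy : G.edgeSet := ⟨s(x, y), G.mem_edgeSet.2 hxy⟩ with hExy
  set Eyz : G.edgeSet := ⟨s(y, z), G.mem_edgeSet.2 hyz⟩ with hEyz
  set Exz : G.edgeSet := ⟨s(x, z), G.mem_edgeSet.2 hxz⟩ with hExz
  have e1 : Exy ≠ Eyz := edge_mk_ne hxy hyz
    ⟨fun ⟨h1, _⟩ => hxyne h1, fun ⟨h1, _⟩ => hxzne h1⟩
  have e2 : Exy ≠ Exz := edge_mk_ne hxy hxz
    ⟨fun ⟨_, h2⟩ => hyzne h2, fun ⟨h1, _⟩ => hxzne h1⟩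
  have e3 : Eyz ≠ Exz := edge_mk_ne hyz hxz
    ⟨fun ⟨h1, _⟩ => hxyne h1.symm, fun ⟨_, h2⟩ => hxzne h2.symm⟩
  set F : Finset G.edgeSet := {Exy, Eyz, Exz} with hF
  have hfull : vcNum G F = 2 := by
    refine vcNum_eq_two' ⟨Exy, by simp [hF]⟩ ?_ x y ?_
    · intro v
      by_cases hvx : v = x
      · refine ⟨Eyz, by simp [hF], ?_⟩
        subst hvx
        simp only [hEyz, Sym2.mem_iff]
        push_neg
        exact ⟨hxyne, hxzne⟩
      · by_cases hvy : v = y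
        · refine ⟨Exz, by simp [hF], ?_⟩
          subst hvy
          simp only [hExz, Sym2.mem_iff]
          push_neg
          exact ⟨Ne.symm hxyne, hyzne⟩
        · refine ⟨Exy, by simp [hF], ?_⟩
          simp only [hExy, Sym2.mem_iff]
          push_neg
          exact ⟨hvx, hvy⟩
    · intro g hg
      simp only [hF, Finset.mem_insert, Finset.mem_singleton] at hg
      rcases hg with rfl | rfl | rfl
      · left; simp [hExy]
      · right; simp [hEyz]
      · left; simp [hExz]
  have hp1 : vcNum G {Exy, Eyz} = 1 := by
    refine vcNum_eq_one ⟨Exy, by simp⟩ y ?_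
    intro e he
    rcases Finset.mem_insert.1 he with rfl | he
    · simp [hExy]
    · rw [Finset.mem_singleton.1 he]; simp [hEyz]
  have hp2 : vcNum G {Eyz, Exz} = 1 := by
    refine vcNum_eq_one ⟨Eyz, by simp⟩ z ?_
    intro e he
    rcases Finset.mem_insert.1 he with rfl | he
    · simp [hEyz]
    · rw [Finset.mem_singleton.1 he]; simp [hExz]
  have hp3 : vcNum G {Exy, Exz} = 1 := by
    refine vcNum_eq_one ⟨Exy, by simp⟩ x ?_
    intro e he
    rcases Finset.mem_insert.1 he with rfl | he
    · simp [hExy]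
    · rw [Finset.mem_singleton.1 he]; simp [hExz]
  have heff : a F Exy + a F Eyz + a F Exz = 2 := by
    have := h.1 F ⟨Exy, by simp [hF]⟩
    rw [hF, sum_triple _ e1 e2 e3] at this
    rw [this, vcGame, hfull]
    norm_num
  have m1 : Exy ∈ F := by simp [hF]
  have m2 : Eyz ∈ F := by simp [hF]
  have m3 : Exz ∈ F := by simp [hF]
  have s1 := pmas_pair_le h e1 m1 m2 hp1
  have s2 := pmas_pair_le h e3 m2 m3 hp2
  have s3 := pmas_pair_le h e2 m1 m3 hp3
  linarith

lemma sum_quad (f : G.edgeSet → ℝ) {p q r s : G.edgeSet} (h1 : p ≠ q) (h2 : p ≠ r)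
    (h3 : p ≠ s) (h4 : q ≠ r) (h5 : q ≠ s) (h6 : r ≠ s) :
    ∑ i ∈ ({p, q, r, s} : Finset G.edgeSet), f i = f p + f q + f r + f s := by
  rw [Finset.sum_insert (by simp [h1, h2, h3]), sum_triple _ h4 h5 h6]
  ring

lemma no_pmas_C4 (h : IsPMAS (vcGame G) a)
    (hc : ContainsSubgraph (SimpleGraph.cycleGraph 4) G) : False := by
  obtain ⟨f, hinj, hadj⟩ := hc
  have a01 : G.Adj (f 0) (f 1) := hadj (by rw [SimpleGraph.cycleGraph_adj]; decide)
  have a12 : G.Adj (f 1) (f 2) := hadj (by rw [SimpleGraph.cycleGraph_adj]; decide)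
  have a23 : G.Adj (f 2) (f 3) := hadj (by rw [SimpleGraph.cycleGraph_adj]; decide)
  have a30 : G.Adj (f 3) (f 0) := hadj (by rw [SimpleGraph.cycleGraph_adj]; decide)
  have d02 : f 0 ≠ f 2 := fun hh => by have := hinj hh; simp at this
  have d13 : f 1 ≠ f 3 := fun hh => by have := hinj hh; simp at this
  have d01 : f 0 ≠ f 1 := a01.ne
  have d12 : f 1 ≠ f 2 := a12.ne
  have d23 : f 2 ≠ f 3 := a23.ne
  have d30 : f 3 ≠ f 0 := a30.ne
  set E01 : G.edgeSet := ⟨s(f 0, f 1), G.mem_edgeSet.2 a01⟩ with hE01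
  set E12 : G.edgeSet := ⟨s(f 1, f 2), G.mem_edgeSet.2 a12⟩ with hE12
  set E23 : G.edgeSet := ⟨s(f 2, f 3), G.mem_edgeSet.2 a23⟩ with hE23
  set E30 : G.edgeSet := ⟨s(f 3, f 0), G.mem_edgeSet.2 a30⟩ with hE30
  have n1 : E01 ≠ E12 := edge_mk_ne a01 a12 ⟨fun ⟨h1, _⟩ => d01 h1, fun ⟨h1, _⟩ => d02 h1⟩
  have n2 : E01 ≠ E23 := edge_mk_ne a01 a23 ⟨fun ⟨h1, _⟩ => d02 h1, fun ⟨h1, _⟩ => d30 h1.symm⟩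
  have n3 : E01 ≠ E30 := edge_mk_ne a01 a30 ⟨fun ⟨h1, _⟩ => d30 h1.symm, fun ⟨_, h2⟩ => d13 h2⟩
  have n4 : E12 ≠ E23 := edge_mk_ne a12 a23 ⟨fun ⟨h1, _⟩ => d12 h1, fun ⟨h1, _⟩ => d13 h1⟩
  have n5 : E12 ≠ E30 := edge_mk_ne a12 a30 ⟨fun ⟨h1, _⟩ => d13 h1, fun ⟨h1, _⟩ => d01 h1.symm⟩
  have n6 : E23 ≠ E30 := edge_mk_ne a23 a30 ⟨fun ⟨h1, _⟩ => d23 h1, fun ⟨h1, _⟩ => d02 h1.symm⟩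
  -- pair vcNums
  have p1 : vcNum G {E01, E12} = 1 := by
    refine vcNum_eq_one ⟨E01, by simp⟩ (f 1) ?_
    intro e he
    rcases Finset.mem_insert.1 he with rfl | he
    · simp [hE01]
    · rw [Finset.mem_singleton.1 he]; simp [hE12]
  have p2 : vcNum G {E12, E23} = 1 := by
    refine vcNum_eq_one ⟨E12, by simp⟩ (f 2) ?_
    intro e he
    rcases Finset.mem_insert.1 he with rfl | he
    · simp [hE12]
    · rw [Finset.mem_singleton.1 he]; simp [hE23]
  have p3 : vcNum G {E23, E30} = 1 := by
    refine vcNum_eq_one ⟨E23, by simp⟩ (f 3) ?_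
    intro e he
    rcases Finset.mem_insert.1 he with rfl | he
    · simp [hE23]
    · rw [Finset.mem_singleton.1 he]; simp [hE30]
  have p4 : vcNum G {E30, E01} = 1 := by
    refine vcNum_eq_one ⟨E30, by simp⟩ (f 0) ?_
    intro e he
    rcases Finset.mem_insert.1 he with rfl | he
    · simp [hE30]
    · rw [Finset.mem_singleton.1 he]; simp [hE01]
  -- disjointness of opposite edges
  have dis1 : ∀ v : V, v ∈ (E01 : Sym2 V) → v ∉ (E23 : Sym2 V) :=
    sym2_disj d02 (Ne.symm d30) d12 d13
  have dis2 : ∀ v : V, v ∈ (E12 : Sym2 V) → v ∉ (E30 : Sym2 V) :=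
    sym2_disj d13 (Ne.symm d01) d23 d02.symm
  -- triple vcNums
  have t1 : vcNum G {E01, E12, E23} = 2 := by
    refine vcNum_eq_two (by simp) (by simp) dis1 (f 1) (f 3) ?_
    intro g hg
    simp only [Finset.mem_insert, Finset.mem_singleton] at hg
    rcases hg with rfl | rfl | rfl
    · left; simp [hE01]
    · left; simp [hE12]
    · right; simp [hE23]
  have t2 : vcNum G {E12, E23, E30} = 2 := by
    refine vcNum_eq_two (by simp) (by simp) dis2 (f 2) (f 0) ?_
    intro g hg
    simp only [Finset.mem_insert, Finset.mem_singleton] at hg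
    rcases hg with rfl | rfl | rfl
    · left; simp [hE12]
    · left; simp [hE23]
    · right; simp [hE30]
  have t3 : vcNum G {E23, E30, E01} = 2 := by
    refine vcNum_eq_two (S := {E23, E30, E01}) (e := E23) (f := E01) (by simp) (by simp)
      (fun v hv hv' => dis1 v hv' hv) (f 3) (f 0) ?_
    intro g hg
    simp only [Finset.mem_insert, Finset.mem_singleton] at hg
    rcases hg with rfl | rfl | rfl
    · left; simp [hE23]
    · left; simp [hE30]
    · right; simp [hE01]
  have t4 : vcNum G {E30, E01, E12} = 2 := by
    refine vcNum_eq_two (S := {E30, E01, E12}) (e := E30) (f := E12) (by simp) (by simp)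
      (fun v hv hv' => dis2 v hv' hv) (f 0) (f 1) ?_
    intro g hg
    simp only [Finset.mem_insert, Finset.mem_singleton] at hg
    rcases hg with rfl | rfl | rfl
    · left; simp [hE30]
    · left; simp [hE01]
    · right; simp [hE12]
  set F : Finset G.edgeSet := {E01, E12, E23, E30} with hF
  have full : vcNum G F = 2 := by
    refine vcNum_eq_two (by simp [hF]) (by simp [hF]) dis1 (f 1) (f 3) ?_
    intro g hg
    simp only [hF, Finset.mem_insert, Finset.mem_singleton] at hg
    rcases hg with rfl | rfl | rfl | rfl
    · left; simp [hE01]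
    · left; simp [hE12]
    · right; simp [hE23]
    · right; simp [hE30]
  have heff : a F E01 + a F E12 + a F E23 + a F E30 = 2 := by
    have := h.1 F ⟨E01, by simp [hF]⟩
    rw [hF, sum_quad _ n1 n2 n3 n4 n5 n6] at this
    rw [this, vcGame, full]
    norm_num
  -- each allocation is ≤ 0
  have m01 : E01 ∈ F := by simp [hF]
  have m12 : E12 ∈ F := by simp [hF]
  have m23 : E23 ∈ F := by simp [hF]
  have m30 : E30 ∈ F := by simp [hF]
  have q1 : a F E12 ≤ 0 := by
    have hm := pmas_mid h n1 n2 n4 p1 p2 t1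
    have hsub : ({E01, E12, E23} : Finset G.edgeSet) ⊆ F := by
      intro x hx
      simp only [Finset.mem_insert, Finset.mem_singleton] at hx
      rcases hx with rfl | rfl | rfl <;> simp [hF]
    have := h.2 ({E01, E12, E23} : Finset G.edgeSet) F hsub E12 (by simp)
    linarith
  have q2 : a F E23 ≤ 0 := by
    have hm := pmas_mid h n4 n5 n6 p2 p3 t2
    have hsub : ({E12, E23, E30} : Finset G.edgeSet) ⊆ F := by
      intro x hx
      simp only [Finset.mem_insert, Finset.mem_singleton] at hx
      rcases hx with rfl | rfl | rfl <;> simp [hF]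
    have := h.2 ({E12, E23, E30} : Finset G.edgeSet) F hsub E23 (by simp)
    linarith
  have q3 : a F E30 ≤ 0 := by
    have hm := pmas_mid h n6 (Ne.symm n2) (Ne.symm n3) p3 p4 t3
    have hsub : ({E23, E30, E01} : Finset G.edgeSet) ⊆ F := by
      intro x hx
      simp only [Finset.mem_insert, Finset.mem_singleton] at hx
      rcases hx with rfl | rfl | rfl <;> simp [hF]
    have := h.2 ({E23, E30, E01} : Finset G.edgeSet) F hsub E30 (by simp)
    linarith
  have q4 : a F E01 ≤ 0 := by
    have hm := pmas_mid h (Ne.symm n3) (Ne.symm n5) n1 p4 p1 t4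
    have hsub : ({E30, E01, E12} : Finset G.edgeSet) ⊆ F := by
      intro x hx
      simp only [Finset.mem_insert, Finset.mem_singleton] at hx
      rcases hx with rfl | rfl | rfl <;> simp [hF]
    have := h.2 ({E30, E01, E12} : Finset G.edgeSet) F hsub E01 (by simp)
    linarith
  linarith

lemma no_pmas_P5 (h : IsPMAS (vcGame G) a)
    (hc : ContainsSubgraph (SimpleGraph.pathGraph 5) G) : False := by
  obtain ⟨f, hinj, hadj⟩ := hc
  have a01 : G.Adj (f 0) (f 1) := hadj (by rw [SimpleGraph.pathGraph_adj]; decide)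
  have a12 : G.Adj (f 1) (f 2) := hadj (by rw [SimpleGraph.pathGraph_adj]; decide)
  have a23 : G.Adj (f 2) (f 3) := hadj (by rw [SimpleGraph.pathGraph_adj]; decide)
  have a34 : G.Adj (f 3) (f 4) := hadj (by rw [SimpleGraph.pathGraph_adj]; decide)
  have d01 : f 0 ≠ f 1 := a01.ne
  have d12 : f 1 ≠ f 2 := a12.ne
  have d23 : f 2 ≠ f 3 := a23.ne
  have d34 : f 3 ≠ f 4 := a34.ne
  have d02 : f 0 ≠ f 2 := fun hh => by have := hinj hh; simp at this
  have d03 : f 0 ≠ f 3 := fun hh => by have := hinj hh; simp at this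
  have d04 : f 0 ≠ f 4 := fun hh => by have := hinj hh; simp at this
  have d13 : f 1 ≠ f 3 := fun hh => by have := hinj hh; simp at this
  have d14 : f 1 ≠ f 4 := fun hh => by have := hinj hh; simp at this
  have d24 : f 2 ≠ f 4 := fun hh => by have := hinj hh; simp at this
  set E0 : G.edgeSet := ⟨s(f 0, f 1), G.mem_edgeSet.2 a01⟩ with hE0
  set E1 : G.edgeSet := ⟨s(f 1, f 2), G.mem_edgeSet.2 a12⟩ with hE1
  set E2 : G.edgeSet := ⟨s(f 2, f 3), G.mem_edgeSet.2 a23⟩ with hE2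
  set E3 : G.edgeSet := ⟨s(f 3, f 4), G.mem_edgeSet.2 a34⟩ with hE3
  have n01 : E0 ≠ E1 := edge_mk_ne a01 a12 ⟨fun ⟨h1, _⟩ => d01 h1, fun ⟨h1, _⟩ => d02 h1⟩
  have n02 : E0 ≠ E2 := edge_mk_ne a01 a23 ⟨fun ⟨h1, _⟩ => d02 h1, fun ⟨h1, _⟩ => d03 h1⟩
  have n12 : E1 ≠ E2 := edge_mk_ne a12 a23 ⟨fun ⟨h1, _⟩ => d12 h1, fun ⟨h1, _⟩ => d13 h1⟩
  have n13 : E1 ≠ E3 := edge_mk_ne a12 a34 ⟨fun ⟨h1, _⟩ => d13 h1, fun ⟨h1, _⟩ => d14 h1⟩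
  have n23 : E2 ≠ E3 := edge_mk_ne a23 a34 ⟨fun ⟨h1, _⟩ => d23 h1, fun ⟨h1, _⟩ => d24 h1⟩
  have s0 : vcNum G {E0} = 1 :=
    vcNum_eq_one ⟨E0, by simp⟩ (f 0) (fun e he => by rw [Finset.mem_singleton.1 he]; simp [hE0])
  have s3 : vcNum G {E3} = 1 :=
    vcNum_eq_one ⟨E3, by simp⟩ (f 3) (fun e he => by rw [Finset.mem_singleton.1 he]; simp [hE3])
  have pair01 : vcNum G {E0, E1} = 1 := by
    refine vcNum_eq_one ⟨E0, by simp⟩ (f 1) ?_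
    intro e he
    rcases Finset.mem_insert.1 he with rfl | he
    · simp [hE0]
    · rw [Finset.mem_singleton.1 he]; simp [hE1]
  have pair12 : vcNum G {E1, E2} = 1 := by
    refine vcNum_eq_one ⟨E1, by simp⟩ (f 2) ?_
    intro e he
    rcases Finset.mem_insert.1 he with rfl | he
    · simp [hE1]
    · rw [Finset.mem_singleton.1 he]; simp [hE2]
  have pair23 : vcNum G {E2, E3} = 1 := by
    refine vcNum_eq_one ⟨E2, by simp⟩ (f 3) ?_
    intro e he
    rcases Finset.mem_insert.1 he with rfl | he
    · simp [hE2]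
    · rw [Finset.mem_singleton.1 he]; simp [hE3]
  have disU : ∀ v : V, v ∈ (E0 : Sym2 V) → v ∉ (E2 : Sym2 V) := sym2_disj d02 d03 d12 d13
  have disV : ∀ v : V, v ∈ (E1 : Sym2 V) → v ∉ (E3 : Sym2 V) := sym2_disj d13 d14 d23 d24
  have tU : vcNum G {E0, E1, E2} = 2 := by
    refine vcNum_eq_two (S := {E0, E1, E2}) (e := E0) (f := E2) (by simp) (by simp)
      disU (f 1) (f 2) ?_
    intro g hg
    simp only [Finset.mem_insert, Finset.mem_singleton] at hg
    rcases hg with rfl | rfl | rfl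
    · left; simp [hE0]
    · left; simp [hE1]
    · right; simp [hE2]
  have tV : vcNum G {E1, E2, E3} = 2 := by
    refine vcNum_eq_two (S := {E1, E2, E3}) (e := E1) (f := E3) (by simp) (by simp)
      disV (f 2) (f 3) ?_
    intro g hg
    simp only [Finset.mem_insert, Finset.mem_singleton] at hg
    rcases hg with rfl | rfl | rfl
    · left; simp [hE1]
    · left; simp [hE2]
    · right; simp [hE3]
  set U : Finset G.edgeSet := {E0, E1, E2} with hU
  set W : Finset G.edgeSet := {E1, E2, E3} with hW
  set P : Finset G.edgeSet := {E1, E2} with hP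
  have effU : a U E0 + a U E1 + a U E2 = 2 := by
    have := h.1 U ⟨E0, by simp [hU]⟩
    rw [hU, sum_triple _ n01 n02 n12] at this
    rw [this, vcGame, tU]
    norm_num
  have effW : a W E1 + a W E2 + a W E3 = 2 := by
    have := h.1 W ⟨E1, by simp [hW]⟩
    rw [hW, sum_triple _ n12 n13 n23] at this
    rw [this, vcGame, tV]
    norm_num
  have effP : a P E1 + a P E2 = 1 := by
    have := h.1 P ⟨E1, by simp [hP]⟩
    rw [hP, sum_pair' _ n12] at this
    rw [this, vcGame, pair12]
    norm_num
  have hmidU : a U E1 ≤ 0 := pmas_mid h n01 n02 n12 pair01 pair12 tU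
  have hmidW : a W E2 ≤ 0 := pmas_mid h n12 n13 n23 pair12 pair23 tV
  have hU0 : a U E0 ≤ 1 := pmas_single_le h (by simp [hU]) s0
  have hW3 : a W E3 ≤ 1 := pmas_single_le h (by simp [hW]) s3
  have hPU : P ⊆ U := by
    rw [hU]
    exact Finset.subset_insert _ _
  have hPW : P ⊆ W := by
    intro x hx
    rw [hP] at hx
    rw [hW]
    rcases Finset.mem_insert.1 hx with rfl | hx
    · simp
    · rw [Finset.mem_singleton.1 hx]; simp
  have mU2 : a U E2 ≤ a P E2 := h.2 P U hPU E2 (by simp [hP])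
  have mW1 : a W E1 ≤ a P E1 := h.2 P W hPW E1 (by simp [hP])
  linarith

end Forbidden



variable {V : Type*} {G : SimpleGraph V}

lemma containsK3 {p q r : V} (h1 : G.Adj p q) (h2 : G.Adj p r) (h3 : G.Adj q r) :
    ContainsSubgraph (⊤ : SimpleGraph (Fin 3)) G := by
  have np : p ≠ q := h1.ne
  have nr : p ≠ r := h2.ne
  have nq : q ≠ r := h3.ne
  refine ⟨![p, q, r], ?_, ?_⟩
  · intro i j hij
    fin_cases i <;> fin_cases j <;> simp_all
  · intro i j hij
    fin_cases i <;> fin_cases j <;> simp_all <;>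
      first | exact h1 | exact h2 | exact h3 | exact h1.symm | exact h2.symm | exact h3.symm

lemma containsC4 {p q r s : V} (h1 : G.Adj p q) (h2 : G.Adj q r) (h3 : G.Adj r s)
    (h4 : G.Adj s p) (npr : p ≠ r) (nqs : q ≠ s) :
    ContainsSubgraph (SimpleGraph.cycleGraph 4) G := by
  have n1 : p ≠ q := h1.ne
  have n2 : q ≠ r := h2.ne
  have n3 : r ≠ s := h3.ne
  have n4 : s ≠ p := h4.ne
  refine ⟨![p, q, r, s], ?_, ?_⟩
  · intro i j hij
    fin_cases i <;> fin_cases j <;> simp_all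
  · intro i j hij
    rw [SimpleGraph.cycleGraph_adj] at hij
    fin_cases i <;> fin_cases j <;> simp_all <;>
      first | (exfalso; revert hij; decide) | exact h1 | exact h2 | exact h3 | exact h4 |
        exact h1.symm | exact h2.symm | exact h3.symm | exact h4.symm

lemma containsP5 {p q r s t : V} (h1 : G.Adj p q) (h2 : G.Adj q r) (h3 : G.Adj r s)
    (h4 : G.Adj s t) (npr : p ≠ r) (nps : p ≠ s) (npt : p ≠ t) (nqs : q ≠ s)
    (nqt : q ≠ t) (nrt : r ≠ t) :
    ContainsSubgraph (SimpleGraph.pathGraph 5) G := by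
  have n1 : p ≠ q := h1.ne
  have n2 : q ≠ r := h2.ne
  have n3 : r ≠ s := h3.ne
  have n4 : s ≠ t := h4.ne
  refine ⟨![p, q, r, s, t], ?_, ?_⟩
  · intro i j hij
    fin_cases i <;> fin_cases j <;> simp_all
  · intro i j hij
    rw [SimpleGraph.pathGraph_adj] at hij
    fin_cases i <;> fin_cases j <;> simp_all <;>
      first | (exfalso; revert hij; decide) | exact h1 | exact h2 | exact h3 | exact h4 |
        exact h1.symm | exact h2.symm | exact h3.symm | exact h4.symm

def Meets (e f : G.edgeSet) : Prop := ∃ v : V, v ∈ (e : Sym2 V) ∧ v ∈ (f : Sym2 V)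

def Central (G : SimpleGraph V) (e : G.edgeSet) : Prop :=
  ∀ v ∈ (e : Sym2 V), ∃ w, G.Adj v w ∧ w ∉ (e : Sym2 V)

open scoped Classical in
noncomputable def ctr (G : SimpleGraph V) (e : G.edgeSet) : V :=
  if h : ∃ p : V × V, (e : Sym2 V) = s(p.1, p.2) ∧ ∀ w, G.Adj p.1 w → w = p.2
  then h.choose.2 else (e : Sym2 V).out.1

lemma adj_of_eq {e : G.edgeSet} {x y : V} (h : (e : Sym2 V) = s(x, y)) : G.Adj x y :=
  G.mem_edgeSet.1 (h ▸ e.2)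

lemma pendant_spec {e : G.edgeSet} (he : ¬ Central G e) :
    ∃ p : V × V, (e : Sym2 V) = s(p.1, p.2) ∧ ∀ w, G.Adj p.1 w → w = p.2 := by
  unfold Central at he
  push_neg at he
  obtain ⟨v, hv, hall⟩ := he
  obtain ⟨y, hey⟩ := Sym2.mem_iff_exists.1 hv
  refine ⟨(v, y), hey, fun w hw => ?_⟩
  have hmem := hall w hw
  rw [hey, Sym2.mem_iff] at hmem
  rcases hmem with rfl | rfl
  · exact absurd rfl hw.ne'
  · rfl

lemma ctr_spec {e : G.edgeSet} (he : ¬ Central G e) :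
    ctr G e ∈ (e : Sym2 V) ∧
      ∃ ℓ, (e : Sym2 V) = s(ℓ, ctr G e) ∧ ∀ w, G.Adj ℓ w → w = ctr G e := by
  classical
  have h := pendant_spec he
  unfold ctr
  rw [dif_pos h]
  obtain ⟨heq, hleaf⟩ := h.choose_spec
  refine ⟨?_, h.choose.1, heq, hleaf⟩
  have hmem : h.choose.2 ∈ s(h.choose.1, h.choose.2) := Sym2.mem_mk_right _ _
  rwa [← heq] at hmem

lemma ctr_mem {e : G.edgeSet} (he : ¬ Central G e) : ctr G e ∈ (e : Sym2 V) :=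
  (ctr_spec he).1

lemma ctr_mem_of_meets {e f : G.edgeSet} (he : ¬ Central G e) (hne : f ≠ e)
    (hm : Meets e f) : ctr G e ∈ (f : Sym2 V) := by
  obtain ⟨-, ℓ, heq, hleaf⟩ := ctr_spec he
  obtain ⟨v, hv_e, hv_f⟩ := hm
  rw [heq, Sym2.mem_iff] at hv_e
  rcases hv_e with rfl | rfl
  · obtain ⟨y, hfy⟩ := Sym2.mem_iff_exists.1 hv_f
    have hadj : G.Adj v y := adj_of_eq hfy
    have hy := hleaf y hadj
    exact absurd (Subtype.ext (by rw [hfy, hy, heq] : (f : Sym2 V) = (e : Sym2 V))) hne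
  · exact hv_f

lemma ctr_eq_of_meets {e f : G.edgeSet} (he : ¬ Central G e) (hf : ¬ Central G f)
    (hm : Meets e f) : ctr G e = ctr G f := by
  by_cases heq : e = f
  · rw [heq]
  · have h1 : ctr G e ∈ (f : Sym2 V) := ctr_mem_of_meets he (fun h => heq h.symm) hm
    obtain ⟨-, ℓf, hfeq, hleaff⟩ := ctr_spec hf
    rw [hfeq, Sym2.mem_iff] at h1
    rcases h1 with h1 | h1
    · exfalso
      have hle : ℓf ∈ (e : Sym2 V) := h1 ▸ ctr_mem he
      obtain ⟨y, heqe⟩ := Sym2.mem_iff_exists.1 hle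
      have hadj : G.Adj ℓf y := adj_of_eq heqe
      have hy := hleaff y hadj
      exact heq (Subtype.ext (by rw [heqe, hy, hfeq] : (e : Sym2 V) = (f : Sym2 V)))
    · exact h1

lemma meets_of_ctr_eq {e f : G.edgeSet} (he : ¬ Central G e) (hf : ¬ Central G f)
    (h : ctr G e = ctr G f) : Meets e f :=
  ⟨ctr G e, ctr_mem he, h ▸ ctr_mem hf⟩

lemma no_adj_central (h3 : ¬ ContainsSubgraph (⊤ : SimpleGraph (Fin 3)) G)
    (h4 : ¬ ContainsSubgraph (SimpleGraph.cycleGraph 4) G)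
    (h5 : ¬ ContainsSubgraph (SimpleGraph.pathGraph 5) G)
    {e f : G.edgeSet} (hne : e ≠ f) (hce : Central G e) (hcf : Central G f)
    (hm : Meets e f) : False := by
  obtain ⟨v, hv_e, hv_f⟩ := hm
  obtain ⟨u, heq⟩ := Sym2.mem_iff_exists.1 hv_e
  obtain ⟨w, hfq⟩ := Sym2.mem_iff_exists.1 hv_f
  have hvu : G.Adj v u := adj_of_eq heq
  have hvw : G.Adj v w := adj_of_eq hfq
  have huw : u ≠ w := fun h => hne (Subtype.ext (by rw [heq, hfq, h]))
  have hu_e : u ∈ (e : Sym2 V) := by rw [heq]; simp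
  have hw_f : w ∈ (f : Sym2 V) := by rw [hfq]; simp
  obtain ⟨x, hux, hx_note⟩ := hce u hu_e
  obtain ⟨y, hwy, hy_notf⟩ := hcf w hw_f
  rw [heq, Sym2.mem_iff] at hx_note
  rw [hfq, Sym2.mem_iff] at hy_notf
  push_neg at hx_note hy_notf
  obtain ⟨hxv, hxu⟩ := hx_note
  obtain ⟨hyv, hyw⟩ := hy_notf
  by_cases hxw : x = w
  · exact h3 (containsK3 hvu hvw (hxw ▸ hux))
  by_cases hyu : y = u
  · exact h3 (containsK3 hvu hvw (hyu ▸ hwy).symm)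
  by_cases hxy : x = y
  · exact h4 (containsC4 hvu hux (hxy ▸ hwy.symm : G.Adj x w) hvw.symm
      (fun h => hxv h.symm) huw)
  · exact h5 (containsP5 hux.symm hvu.symm hvw hwy
      hxv hxw hxy huw (fun h => hyu h.symm) (fun h => hyv h.symm))

open Finset in
open scoped Classical in
noncomputable def alloc (G : SimpleGraph V) (S : Finset G.edgeSet) (e : G.edgeSet) : ℝ :=
  if Central G e then (if ∃ f ∈ S, f ≠ e ∧ Meets f e then 0 else 1)
  else ((S.filter (fun f => ¬ Central G f ∧ ctr G f = ctr G e)).card : ℝ)⁻¹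

open scoped Classical in
lemma alloc_mono (S T : Finset G.edgeSet) (hST : S ⊆ T) (e : G.edgeSet) (heS : e ∈ S) :
    alloc G T e ≤ alloc G S e := by
  classical
  by_cases hc : Central G e
  · simp only [alloc, if_pos hc]
    by_cases hS : ∃ f ∈ S, f ≠ e ∧ Meets f e
    · obtain ⟨f, hf, hfe, hm⟩ := hS
      rw [if_pos ⟨f, hST hf, hfe, hm⟩, if_pos ⟨f, hf, hfe, hm⟩]
    · rw [if_neg hS]
      split <;> norm_num
  · simp only [alloc, if_neg hc]
    have hpos : (0 : ℝ) < ((S.filter (fun f => ¬ Central G f ∧ ctr G f = ctr G e)).card : ℝ) := by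
      have : e ∈ S.filter (fun f => ¬ Central G f ∧ ctr G f = ctr G e) :=
        Finset.mem_filter.2 ⟨heS, hc, rfl⟩
      exact_mod_cast Finset.card_pos.2 ⟨e, this⟩
    have hle : ((S.filter (fun f => ¬ Central G f ∧ ctr G f = ctr G e)).card : ℝ) ≤
        ((T.filter (fun f => ¬ Central G f ∧ ctr G f = ctr G e)).card : ℝ) := by
      exact_mod_cast Finset.card_le_card (Finset.filter_subset_filter _ hST)
    exact inv_anti₀ hpos hle

lemma sum_inv_card_fiber {α β : Type*} [DecidableEq β] (s : Finset α) (g : α → β) :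
    ∑ x ∈ s, ((s.filter (fun y => g y = g x)).card : ℝ)⁻¹ = ((s.image g).card : ℝ) := by
  classical
  rw [← Finset.sum_fiberwise_of_maps_to (fun x hx => Finset.mem_image_of_mem g hx)
    (fun x => ((s.filter (fun y => g y = g x)).card : ℝ)⁻¹)]
  rw [Finset.card_eq_sum_ones (s.image g)]
  push_cast
  refine Finset.sum_congr rfl fun b hb => ?_
  obtain ⟨x0, hx0, hgx0⟩ := Finset.mem_image.1 hb
  have hcong : ∀ x ∈ s.filter (fun y => g y = b),
      ((s.filter (fun y => g y = g x)).card : ℝ)⁻¹ =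
      ((s.filter (fun y => g y = b)).card : ℝ)⁻¹ := fun x hx => by
    rw [(Finset.mem_filter.1 hx).2]
  rw [Finset.sum_congr rfl hcong, Finset.sum_const, nsmul_eq_mul]
  have hpos : (0 : ℝ) < ((s.filter (fun y => g y = b)).card : ℝ) := by
    exact_mod_cast Finset.card_pos.2 ⟨x0, Finset.mem_filter.2 ⟨hx0, hgx0⟩⟩
  field_simp

open scoped Classical in
lemma vcNum_eq_count
    (hnac : ∀ {e f : G.edgeSet}, e ≠ f → Central G e → Central G f → Meets e f → False)
    (S : Finset G.edgeSet) :
    vcNum G S = ((S.filter fun e => ¬ Central G e).image (ctr G)).card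
      + (S.filter fun e => Central G e ∧ ¬ ∃ f ∈ S, f ≠ e ∧ Meets f e).card := by
  classical
  set Pend := S.filter fun e => ¬ Central G e with hPend
  set Iso := S.filter fun e => Central G e ∧ ¬ ∃ f ∈ S, f ≠ e ∧ Meets f e with hIso
  set D1 := Pend.image (ctr G) with hD1
  refine le_antisymm ?_ ?_
  · -- upper bound: explicit cover
    set C := D1 ∪ Iso.image (fun e : G.edgeSet => (e : Sym2 V).out.1) with hC
    have hcover : IsVertexCoverOf G C S := by
      intro e he
      by_cases hc : Central G e
      · by_cases hiso : ∃ f ∈ S, f ≠ e ∧ Meets f e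
        · obtain ⟨f, hfS, hfe, hm⟩ := hiso
          have hfp : ¬ Central G f := fun hcf => hnac hfe hcf hc hm
          refine ⟨ctr G f, ?_, ctr_mem_of_meets hfp (fun h => hfe h.symm) hm⟩
          exact Finset.mem_union_left _
            (Finset.mem_image_of_mem _ (Finset.mem_filter.2 ⟨hfS, hfp⟩))
        · refine ⟨(e : Sym2 V).out.1, ?_, Sym2.out_fst_mem _⟩
          exact Finset.mem_union_right _
            (Finset.mem_image_of_mem _ (Finset.mem_filter.2 ⟨he, hc, hiso⟩))
      · exact ⟨ctr G e, Finset.mem_union_left _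
          (Finset.mem_image_of_mem _ (Finset.mem_filter.2 ⟨he, hc⟩)), ctr_mem hc⟩
    calc vcNum G S ≤ C.card := vcNum_le hcover
      _ ≤ D1.card + (Iso.image (fun e : G.edgeSet => (e : Sym2 V).out.1)).card :=
          Finset.card_union_le _ _
      _ ≤ D1.card + Iso.card := by
          exact Nat.add_le_add_left (Finset.card_image_le) _
  · -- lower bound
    obtain ⟨C, hC, hcard⟩ := vcNum_spec (G := G) S
    rw [← hcard]
    -- choice functions
    have hex1 : ∀ v ∈ D1, ∃ c, c ∈ C ∧ ∃ e, e ∈ Pend ∧ ctr G e = v ∧ c ∈ (e : Sym2 V) := by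
      intro v hv
      obtain ⟨e, heP, hev⟩ := Finset.mem_image.1 hv
      obtain ⟨c, hcC, hce⟩ := hC e (Finset.mem_filter.1 heP).1
      exact ⟨c, hcC, e, heP, hev, hce⟩
    have hex2 : ∀ e ∈ Iso, ∃ c, c ∈ C ∧ c ∈ (e : Sym2 V) := by
      intro e heI
      obtain ⟨c, hcC, hce⟩ := hC e (Finset.mem_filter.1 heI).1
      exact ⟨c, hcC, hce⟩
    set φ : V → V := fun v =>
      if h : ∃ c, c ∈ C ∧ ∃ e, e ∈ Pend ∧ ctr G e = v ∧ c ∈ (e : Sym2 V) then h.choose else v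
      with hφ
    set ψ : G.edgeSet → V := fun e => if h : ∃ c, c ∈ C ∧ c ∈ (e : Sym2 V) then h.choose else
      (e : Sym2 V).out.1 with hψ
    have hφspec : ∀ v ∈ D1, φ v ∈ C ∧ ∃ e, e ∈ Pend ∧ ctr G e = v ∧ φ v ∈ (e : Sym2 V) := by
      intro v hv
      have h := hex1 v hv
      rw [hφ]
      simp only [dif_pos h]
      exact h.choose_spec
    have hψspec : ∀ e ∈ Iso, ψ e ∈ C ∧ ψ e ∈ (e : Sym2 V) := by
      intro e he
      have h := hex2 e he
      rw [hψ]
      simp only [dif_pos h]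
      exact h.choose_spec
    have hsub : D1.image φ ∪ Iso.image ψ ⊆ C := by
      intro c hc
      rcases Finset.mem_union.1 hc with hc | hc
      · obtain ⟨v, hv, rfl⟩ := Finset.mem_image.1 hc
        exact (hφspec v hv).1
      · obtain ⟨e, he, rfl⟩ := Finset.mem_image.1 hc
        exact (hψspec e he).1
    have hinj1 : Set.InjOn φ ↑D1 := by
      intro v hv w hw hvw
      obtain ⟨-, ev, hevP, hevc, hevm⟩ := hφspec v hv
      obtain ⟨-, ew, hewP, hewc, hewm⟩ := hφspec w hw
      by_cases heq : ev = ew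
      · rw [← hevc, ← hewc, heq]
      · have hmeet : Meets ev ew := ⟨φ v, hevm, hvw ▸ hewm⟩
        have := ctr_eq_of_meets (Finset.mem_filter.1 hevP).2 (Finset.mem_filter.1 hewP).2 hmeet
        rw [← hevc, ← hewc, this]
    have hinj2 : Set.InjOn ψ ↑Iso := by
      intro e he e' he' hee
      by_contra hne
      have hmeet : Meets e' e := ⟨ψ e, hee ▸ (hψspec e' he').2, (hψspec e he).2⟩
      exact (Finset.mem_filter.1 he).2.2 ⟨e', (Finset.mem_filter.1 he').1,
        (fun h => hne h.symm), hmeet⟩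
    have hdisj : Disjoint (D1.image φ) (Iso.image ψ) := by
      rw [Finset.disjoint_left]
      intro c hc1 hc2
      obtain ⟨v, hv, rfl⟩ := Finset.mem_image.1 hc1
      obtain ⟨e, he, hpsi⟩ := Finset.mem_image.1 hc2
      obtain ⟨-, ev, hevP, hevc, hevm⟩ := hφspec v hv
      have hcentral : Central G e := (Finset.mem_filter.1 he).2.1
      have hne : ev ≠ e := fun h => (Finset.mem_filter.1 hevP).2 (h ▸ hcentral)
      have hmeet : Meets ev e := ⟨φ v, hevm, hpsi ▸ (hψspec e he).2⟩
      exact (Finset.mem_filter.1 he).2.2 ⟨ev, (Finset.mem_filter.1 hevP).1, hne, hmeet⟩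
    calc D1.card + Iso.card = (D1.image φ).card + (Iso.image ψ).card := by
          rw [Finset.card_image_of_injOn hinj1, Finset.card_image_of_injOn hinj2]
      _ = (D1.image φ ∪ Iso.image ψ).card := (Finset.card_union_of_disjoint hdisj).symm
      _ ≤ C.card := Finset.card_le_card hsub

open scoped Classical in
lemma alloc_sum
    (hnac : ∀ {e f : G.edgeSet}, e ≠ f → Central G e → Central G f → Meets e f → False)
    (S : Finset G.edgeSet) :
    ∑ e ∈ S, alloc G S e = (vcNum G S : ℝ) := by
  classical
  rw [vcNum_eq_count hnac S]
  rw [← Finset.sum_filter_add_sum_filter_not S (fun e => Central G e) (alloc G S)]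
  have hcent : ∑ e ∈ S.filter (fun e => Central G e), alloc G S e
      = ((S.filter fun e => Central G e ∧ ¬ ∃ f ∈ S, f ≠ e ∧ Meets f e).card : ℝ) := by
    have h1 : ∀ e ∈ S.filter (fun e => Central G e), alloc G S e =
        if ∃ f ∈ S, f ≠ e ∧ Meets f e then (0 : ℝ) else 1 := by
      intro e he
      rw [alloc, if_pos (Finset.mem_filter.1 he).2]
    rw [Finset.sum_congr rfl h1]
    rw [Finset.sum_ite, Finset.sum_const, Finset.sum_const]
    simp only [smul_zero, zero_add, nsmul_eq_mul, mul_one]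
    congr 1
    rw [Finset.filter_filter]
  have hpend : ∑ e ∈ S.filter (fun e => ¬ Central G e), alloc G S e
      = (((S.filter fun e => ¬ Central G e).image (ctr G)).card : ℝ) := by
    set Pend := S.filter fun e => ¬ Central G e with hPend
    have h1 : ∀ e ∈ Pend, alloc G S e =
        ((Pend.filter (fun f => ctr G f = ctr G e)).card : ℝ)⁻¹ := by
      intro e he
      rw [alloc, if_neg (Finset.mem_filter.1 he).2]
      congr 2
      rw [hPend, Finset.filter_filter]
    rw [Finset.sum_congr rfl h1]
    exact sum_inv_card_fiber Pend (ctr G)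
  rw [hcent, hpend]
  push_cast
  ring

end VCAux

/-- The vertex cover game on `G` is population monotonic (admits a PMAS) if and
only if `G` contains no subgraph isomorphic to `K₃`, `C₄`, or `P₅`. -/
theorem vertexCoverGame_pmas_iff {V : Type*} [Fintype V] (G : SimpleGraph V) :
    (∃ a : Finset G.edgeSet → G.edgeSet → ℝ, IsPMAS (vcGame G) a) ↔
    (¬ ContainsSubgraph (⊤ : SimpleGraph (Fin 3)) G ∧
     ¬ ContainsSubgraph (SimpleGraph.cycleGraph 4) G ∧
     ¬ ContainsSubgraph (SimpleGraph.pathGraph 5) G) := by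
  constructor
  · rintro ⟨a, ha⟩
    exact ⟨fun hc => VCAux.no_pmas_K3 ha hc, fun hc => VCAux.no_pmas_C4 ha hc,
      fun hc => VCAux.no_pmas_P5 ha hc⟩
  · rintro ⟨h3, h4, h5⟩
    have hnac : ∀ {e f : G.edgeSet}, e ≠ f → VCAux.Central G e → VCAux.Central G f →
        VCAux.Meets e f → False :=
      fun hne hce hcf hm => VCAux.no_adj_central h3 h4 h5 hne hce hcf hm
    refine ⟨VCAux.alloc G, ?_, ?_⟩
    · intro S hS
      rw [vcGame]
      exact VCAux.alloc_sum (fun hne hce hcf hm => hnac hne hce hcf hm) S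
    · intro S T hST i hi
      exact VCAux.alloc_mono S T hST i hi
end

section
/- Let Γ_G be the vertex cover game on a graph G admitting a PMAS a, let S be a nonempty coalition, v a vertex in G[S], and δ_S(v) the set of edges of S incident to v. Then Σ_{i ∈ δ_S(v)} a_{S,i} ≤ 1. -/
/-- For a PMAS `a` of the vertex cover game on `G`, a nonempty coalition `S` and a
vertex `v` of `G[S]`, the total amount allocated to the edges of `S` incident to
`v` is at most `1`. -/
theorem pmas_vertex_sum_le_one {V : Type*} [Fintype V] [DecidableEq V]
    (G : SimpleGraph V) (a : Finset G.edgeSet → G.edgeSet → ℝ)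
    (ha : IsPMAS (vcGame G) a) (S : Finset G.edgeSet) (hS : S.Nonempty)
    (v : V) (hv : ∃ i ∈ S, v ∈ (i : Sym2 V)) :
    ∑ i ∈ S.filter (fun i : G.edgeSet => v ∈ (i : Sym2 V)), a S i ≤ 1 := by
  classical
  obtain ⟨heff, hmono⟩ := ha
  set T := S.filter (fun i : G.edgeSet => v ∈ (i : Sym2 V)) with hT
  have hTsub : T ⊆ S := Finset.filter_subset _ _
  have hTne : T.Nonempty := by
    obtain ⟨i, hiS, hiv⟩ := hv
    exact ⟨i, Finset.mem_filter.mpr ⟨hiS, hiv⟩⟩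
  have h1 : ∑ i ∈ T, a S i ≤ ∑ i ∈ T, a T i :=
    Finset.sum_le_sum fun i hi => hmono T S hTsub i hi
  have h2 : ∑ i ∈ T, a T i = vcGame G T := heff T hTne
  have h3 : vcNum G T ≤ 1 := by
    apply Nat.sInf_le
    refine ⟨{v}, ?_, Finset.card_singleton v⟩
    intro e he
    exact ⟨v, Finset.mem_singleton_self v, (Finset.mem_filter.mp he).2⟩
  calc ∑ i ∈ T, a S i ≤ ∑ i ∈ T, a T i := h1
    _ = vcGame G T := h2
    _ ≤ 1 := by unfold vcGame; exact_mod_cast h3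
end

section
/- Let Γ_G be the vertex cover game on a graph G every component of which is a tree of diameter at most 3, and let a be a PMAS for Γ_G. If S is a coalition such that G[S] is a pisces with free rider i* having endpoints v_1*, v_2*, then a_{S,i*} = 0 and Σ_{i ∈ δ_S(v_k*)} a_{S,i} = 1 for k = 1, 2. -/
/-- If a nonempty coalition is covered by a single vertex, its vertex cover
number is `1`. -/
lemma vcNum_eq_one_of_common {V : Type*} (G : SimpleGraph V) (T : Finset G.edgeSet)
    (hT : T.Nonempty) (w : V) (hw : ∀ e ∈ T, w ∈ (e : Sym2 V)) : vcNum G T = 1 := by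
  have h1 : (1 : ℕ) ∈ {n | ∃ C : Finset V, IsVertexCoverOf G C T ∧ C.card = n} :=
    ⟨{w}, fun e he => ⟨w, Finset.mem_singleton_self w, hw e he⟩, Finset.card_singleton w⟩
  refine le_antisymm (Nat.sInf_le h1) (le_csInf ⟨1, h1⟩ ?_)
  rintro n ⟨C, hC, rfl⟩
  obtain ⟨e, he⟩ := hT
  obtain ⟨v, hv, -⟩ := hC e he
  exact Finset.card_pos.2 ⟨v, hv⟩

/-- Let `G` be a graph each of whose components is a tree of diameter at most `3`,
`a` a PMAS for the vertex cover game on `G`, and `S` a coalition such that `G[S]`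
is a pisces with free rider `istar` and bases `v₁, v₂` (every edge of `S` is
covered by `{v₁, v₂}`, any two distinct edges of `S` can only meet at `v₁` or
`v₂`, and both bases are incident to an edge of `S` other than `istar`). Then
`a_{S,istar} = 0` and the allocation over the edges at each base sums to `1`. -/
theorem pmas_pisces_free_rider {V : Type*} [Fintype V] [DecidableEq V]
    (G : SimpleGraph V)
    (hacyc : G.IsAcyclic) (hdiam : ∀ u v : V, G.Reachable u v → G.dist u v ≤ 3)
    (a : Finset G.edgeSet → G.edgeSet → ℝ) (ha : IsPMAS (vcGame G) a)
    (S : Finset G.edgeSet) (istar : G.edgeSet) (v₁ v₂ : V)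
    (hmem : istar ∈ S) (hne : v₁ ≠ v₂) (hedge : (istar : Sym2 V) = s(v₁, v₂))
    (hcover : ∀ j ∈ S, v₁ ∈ (j : Sym2 V) ∨ v₂ ∈ (j : Sym2 V))
    (hmeet : ∀ j ∈ S, ∀ k ∈ S, j ≠ k →
      ∀ w : V, w ∈ (j : Sym2 V) → w ∈ (k : Sym2 V) → w = v₁ ∨ w = v₂)
    (h₁ : ∃ j ∈ S, j ≠ istar ∧ v₁ ∈ (j : Sym2 V))
    (h₂ : ∃ j ∈ S, j ≠ istar ∧ v₂ ∈ (j : Sym2 V)) :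
    a S istar = 0 ∧
    (∑ i ∈ S.filter (fun i : G.edgeSet => v₁ ∈ (i : Sym2 V)), a S i = 1) ∧
    (∑ i ∈ S.filter (fun i : G.edgeSet => v₂ ∈ (i : Sym2 V)), a S i = 1) := by
  classical
  obtain ⟨j₁, hj₁S, hj₁ne, hj₁v⟩ := h₁
  obtain ⟨j₂, hj₂S, hj₂ne, hj₂v⟩ := h₂
  have hi1 : v₁ ∈ (istar : Sym2 V) := by rw [hedge]; exact Sym2.mem_mk_left v₁ v₂
  have hi2 : v₂ ∈ (istar : Sym2 V) := by rw [hedge]; exact Sym2.mem_mk_right v₁ v₂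
  -- an edge containing both bases is the free rider
  have key : ∀ j : G.edgeSet, v₁ ∈ (j : Sym2 V) → v₂ ∈ (j : Sym2 V) → j = istar := by
    intro j h1 h2
    apply Subtype.ext
    rw [hedge]
    exact (Sym2.mem_and_mem_iff hne).1 ⟨h1, h2⟩
  have hj₁n2 : v₂ ∉ (j₁ : Sym2 V) := fun h => hj₁ne (key j₁ hj₁v h)
  have hj₂n1 : v₁ ∉ (j₂ : Sym2 V) := fun h => hj₂ne (key j₂ h hj₂v)
  set A : Finset G.edgeSet := S.filter (fun i : G.edgeSet => v₁ ∈ (i : Sym2 V)) with hA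
  set B : Finset G.edgeSet := S.filter (fun i : G.edgeSet => v₂ ∈ (i : Sym2 V)) with hB
  have hAsub : A ⊆ S := Finset.filter_subset _ _
  have hBsub : B ⊆ S := Finset.filter_subset _ _
  have hiA : istar ∈ A := Finset.mem_filter.2 ⟨hmem, hi1⟩
  have hiB : istar ∈ B := Finset.mem_filter.2 ⟨hmem, hi2⟩
  have hj₁A : j₁ ∈ A := Finset.mem_filter.2 ⟨hj₁S, hj₁v⟩
  have hj₂B : j₂ ∈ B := Finset.mem_filter.2 ⟨hj₂S, hj₂v⟩
  set A' : Finset G.edgeSet := A.erase istar with hA'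
  set B' : Finset G.edgeSet := B.erase istar with hB'
  have hj₁A' : j₁ ∈ A' := Finset.mem_erase.2 ⟨hj₁ne, hj₁A⟩
  have hj₂B' : j₂ ∈ B' := Finset.mem_erase.2 ⟨hj₂ne, hj₂B⟩
  -- vertex cover numbers
  have hS2 : vcNum G S = 2 := by
    have h2m : (2 : ℕ) ∈ {n | ∃ C : Finset V, IsVertexCoverOf G C S ∧ C.card = n} := by
      refine ⟨{v₁, v₂}, ?_, Finset.card_pair hne⟩
      intro e he
      rcases hcover e he with h | h
      · exact ⟨v₁, by simp, h⟩
      · exact ⟨v₂, by simp, h⟩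
    refine le_antisymm (Nat.sInf_le h2m) (le_csInf ⟨2, h2m⟩ ?_)
    rintro n ⟨C, hC, rfl⟩
    by_contra hlt
    push_neg at hlt
    have hone : ∀ x ∈ C, ∀ y ∈ C, x = y :=
      Finset.card_le_one.1 (Nat.lt_succ_iff.1 hlt)
    obtain ⟨w, hwC, hw1⟩ := hC j₁ hj₁S
    obtain ⟨u, huC, hu⟩ := hC istar hmem
    obtain ⟨x, hxC, hx2⟩ := hC j₂ hj₂S
    have hwu : w = u := hone w hwC u huC
    have hxu : x = u := hone x hxC u huC
    rw [hedge] at hu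
    rcases Sym2.mem_iff.1 hu with rfl | rfl
    · exact hj₂n1 (hxu ▸ hx2)
    · exact hj₁n2 (hwu ▸ hw1)
  have hvcA : vcNum G A = 1 :=
    vcNum_eq_one_of_common G A ⟨istar, hiA⟩ v₁ fun e he => (Finset.mem_filter.1 he).2
  have hvcB : vcNum G B = 1 :=
    vcNum_eq_one_of_common G B ⟨istar, hiB⟩ v₂ fun e he => (Finset.mem_filter.1 he).2
  have hvcA' : vcNum G A' = 1 :=
    vcNum_eq_one_of_common G A' ⟨j₁, hj₁A'⟩ v₁
      fun e he => (Finset.mem_filter.1 (Finset.mem_of_mem_erase he)).2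
  have hvcB' : vcNum G B' = 1 :=
    vcNum_eq_one_of_common G B' ⟨j₂, hj₂B'⟩ v₂
      fun e he => (Finset.mem_filter.1 (Finset.mem_of_mem_erase he)).2
  -- decompositions of S
  have hdisjAB' : Disjoint A B' := by
    rw [Finset.disjoint_left]
    intro j hjA hjB'
    exact (Finset.mem_erase.1 hjB').1
      (key j (Finset.mem_filter.1 hjA).2
        (Finset.mem_filter.1 (Finset.mem_of_mem_erase hjB')).2)
  have hdisjA'B : Disjoint A' B := by
    rw [Finset.disjoint_left]
    intro j hjA' hjB
    exact (Finset.mem_erase.1 hjA').1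
      (key j (Finset.mem_filter.1 (Finset.mem_of_mem_erase hjA')).2
        (Finset.mem_filter.1 hjB).2)
  have hunion1 : A ∪ B' = S := by
    apply Finset.Subset.antisymm
    · exact Finset.union_subset hAsub (Finset.Subset.trans (Finset.erase_subset _ _) hBsub)
    · intro j hj
      rcases hcover j hj with h | h
      · exact Finset.mem_union_left _ (Finset.mem_filter.2 ⟨hj, h⟩)
      · by_cases hji : v₁ ∈ (j : Sym2 V)
        · exact Finset.mem_union_left _ (Finset.mem_filter.2 ⟨hj, hji⟩)
        · refine Finset.mem_union_right _ (Finset.mem_erase.2 ⟨?_, Finset.mem_filter.2 ⟨hj, h⟩⟩)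
          exact fun hji' => hji (hji' ▸ hi1)
  have hunion2 : A' ∪ B = S := by
    apply Finset.Subset.antisymm
    · exact Finset.union_subset (Finset.Subset.trans (Finset.erase_subset _ _) hAsub) hBsub
    · intro j hj
      rcases hcover j hj with h | h
      · by_cases hji : v₂ ∈ (j : Sym2 V)
        · exact Finset.mem_union_right _ (Finset.mem_filter.2 ⟨hj, hji⟩)
        · refine Finset.mem_union_left _ (Finset.mem_erase.2 ⟨?_, Finset.mem_filter.2 ⟨hj, h⟩⟩)
          exact fun hji' => hji (hji' ▸ hi2)
      · exact Finset.mem_union_right _ (Finset.mem_filter.2 ⟨hj, h⟩)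
  -- efficiency
  have effS : ∑ i ∈ S, a S i = 2 := by
    have h := ha.1 S ⟨istar, hmem⟩
    rw [h, vcGame, hS2]; norm_num
  have eff1 : ∀ T : Finset G.edgeSet, T.Nonempty → vcNum G T = 1 → ∑ i ∈ T, a T i = 1 := by
    intro T hT h1
    have h := ha.1 T hT
    rw [h, vcGame, h1]; norm_num
  -- monotonicity bounds
  have mono : ∀ T : Finset G.edgeSet, T ⊆ S → ∑ i ∈ T, a S i ≤ ∑ i ∈ T, a T i :=
    fun T hT => Finset.sum_le_sum fun i hi => ha.2 T S hT i hi
  have hAle : ∑ i ∈ A, a S i ≤ 1 := by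
    have := mono A hAsub
    rw [eff1 A ⟨istar, hiA⟩ hvcA] at this; exact this
  have hBle : ∑ i ∈ B, a S i ≤ 1 := by
    have := mono B hBsub
    rw [eff1 B ⟨istar, hiB⟩ hvcB] at this; exact this
  have hA'le : ∑ i ∈ A', a S i ≤ 1 := by
    have := mono A' (Finset.Subset.trans (Finset.erase_subset _ _) hAsub)
    rw [eff1 A' ⟨j₁, hj₁A'⟩ hvcA'] at this; exact this
  have hB'le : ∑ i ∈ B', a S i ≤ 1 := by
    have := mono B' (Finset.Subset.trans (Finset.erase_subset _ _) hBsub)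
    rw [eff1 B' ⟨j₂, hj₂B'⟩ hvcB'] at this; exact this
  have hsplit1 : ∑ i ∈ A, a S i + ∑ i ∈ B', a S i = 2 := by
    rw [← Finset.sum_union hdisjAB', hunion1, effS]
  have hsplit2 : ∑ i ∈ A', a S i + ∑ i ∈ B, a S i = 2 := by
    rw [← Finset.sum_union hdisjA'B, hunion2, effS]
  have hAeq : ∑ i ∈ A, a S i = 1 := by linarith
  have hBeq : ∑ i ∈ B, a S i = 1 := by linarith
  have hB'eq : ∑ i ∈ B', a S i = 1 := by linarith
  have hBsum : ∑ i ∈ B', a S i + a S istar = ∑ i ∈ B, a S i :=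
    Finset.sum_erase_add B _ hiB
  refine ⟨by linarith, hAeq, hBeq⟩
end

section
/- Let G be a graph all of whose components are trees of diameter at most 3, equipped with a preference system ≺ (a strict linear order ≺_v on the edges incident to each vertex v) in which every free rider is ranked last at both of its endpoints. Then for every nonempty edge set S, the preference system (G[S], ≺_S) has a unique stable matching M_S, and M_S is a maximum matching of G[S] with |M_S| = ν(G[S]) = τ(G[S]). -/
/-- `M` is a matching of the edge-induced subgraph `G[S]`: a set of edges of `S`,
pairwise sharing no vertex. -/
def IsMatchingOf {V : Type*} (G : SimpleGraph V) (S M : Finset G.edgeSet) : Prop :=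
  M ⊆ S ∧ ∀ e ∈ M, ∀ f ∈ M, e ≠ f →
    ∀ v : V, ¬ (v ∈ (e : Sym2 V) ∧ v ∈ (f : Sym2 V))

/-- The matching number `ν(G[S])`. -/
noncomputable def matchNum {V : Type*} (G : SimpleGraph V) (S : Finset G.edgeSet) : ℕ :=
  sSup {n | ∃ M : Finset G.edgeSet, IsMatchingOf G S M ∧ M.card = n}

/-- A preference system on `G` is given by ranks `rank v e` of the edges `e` at
each vertex `v`; it is strict when no two distinct edges at a vertex get the same
rank (`rank v e < rank v f` means `e` is preferred to, i.e. dominates, `f` at `v`). -/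
def StrictPreference {V : Type*} (G : SimpleGraph V) (rank : V → Sym2 V → ℕ) : Prop :=
  ∀ (v : V) (e f : G.edgeSet), v ∈ (e : Sym2 V) → v ∈ (f : Sym2 V) →
    rank v (e : Sym2 V) = rank v (f : Sym2 V) → e = f

/-- `M` is a stable matching of `(G[S], ≺_S)`: a matching of `G[S]` such that
every edge of `S` not in `M` is dominated at a common vertex by an edge of `M`. -/
def IsStableMatchingOf {V : Type*} (G : SimpleGraph V) (rank : V → Sym2 V → ℕ)
    (S M : Finset G.edgeSet) : Prop :=
  IsMatchingOf G S M ∧ ∀ e ∈ S, e ∉ M → ∃ f ∈ M, ∃ v : V,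
    v ∈ (e : Sym2 V) ∧ v ∈ (f : Sym2 V) ∧ rank v (f : Sym2 V) < rank v (e : Sym2 V)

/-- Every free rider has the lowest rank (is least preferred) at both of its
endpoints. -/
def FreeRidersLast {V : Type*} [Fintype V] (G : SimpleGraph V) [DecidableRel G.Adj]
    (rank : V → Sym2 V → ℕ) : Prop :=
  ∀ e : G.edgeSet, FreeRider G e → ∀ v ∈ (e : Sym2 V), ∀ f : G.edgeSet,
    v ∈ (f : Sym2 V) → f ≠ e → rank v (f : Sym2 V) < rank v (e : Sym2 V)

/-- If every component of `G` is a tree of diameter at most `3` and `≺` is a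
strict preference system in which every free rider is ranked last at both its
endpoints, then for every nonempty edge set `S` the preference system
`(G[S], ≺_S)` has a unique stable matching `M_S`, which moreover is a maximum
matching of `G[S]` with `|M_S| = ν(G[S]) = τ(G[S])`. -/
theorem unique_stable_matching_is_maximum {V : Type*} [Fintype V]
    (G : SimpleGraph V) [DecidableRel G.Adj]
    (hacyc : G.IsAcyclic) (hdiam : ∀ u v : V, G.Reachable u v → G.dist u v ≤ 3)
    (rank : V → Sym2 V → ℕ) (hstrict : StrictPreference G rank)
    (hlast : FreeRidersLast G rank) :
    ∀ S : Finset G.edgeSet, S.Nonempty →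
      ∃ M : Finset G.edgeSet, IsStableMatchingOf G rank S M ∧
        (∀ M' : Finset G.edgeSet, IsStableMatchingOf G rank S M' → M' = M) ∧
        M.card = matchNum G S ∧ matchNum G S = vcNum G S := by
  classical
  intro S hS
  -- a vertex with two distinct incident edges is not pendant
  have hnp : ∀ (v : V) (e f : G.edgeSet), v ∈ (e : Sym2 V) → v ∈ (f : Sym2 V) →
      e ≠ f → ¬ Pendant G v := by
    intro v e f hve hvf hef hp
    obtain ⟨a, ha⟩ := Sym2.mem_iff_exists.mp hve
    obtain ⟨b, hb⟩ := Sym2.mem_iff_exists.mp hvf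
    have hadj_a : G.Adj v a := G.mem_edgeSet.mp (ha ▸ e.2)
    have hadj_b : G.Adj v b := G.mem_edgeSet.mp (hb ▸ f.2)
    have hab : a ≠ b := by
      intro h; apply hef; apply Subtype.ext; rw [ha, hb, h]
    have h1 : 1 < G.degree v := by
      rw [← SimpleGraph.card_neighborFinset_eq_degree]
      exact Finset.one_lt_card.mpr ⟨a, by simpa [SimpleGraph.mem_neighborFinset] using hadj_a,
        b, by simpa [SimpleGraph.mem_neighborFinset] using hadj_b, hab⟩
    unfold Pendant at hp; omega
  -- minimal edge at a vertex
  have hmin : ∀ (v : V) (e : G.edgeSet), e ∈ S → v ∈ (e : Sym2 V) →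
      ∃ m, m ∈ S ∧ v ∈ (m : Sym2 V) ∧ ∀ f ∈ S, v ∈ (f : Sym2 V) →
        rank v (m : Sym2 V) ≤ rank v (f : Sym2 V) := by
    intro v e heS hve
    obtain ⟨m, hm, hmn⟩ := Finset.exists_min_image
      (S.filter (fun f : G.edgeSet => v ∈ (f : Sym2 V))) (fun f : G.edgeSet => rank v (f : Sym2 V))
      ⟨e, Finset.mem_filter.mpr ⟨heS, hve⟩⟩
    exact ⟨m, (Finset.mem_filter.mp hm).1, (Finset.mem_filter.mp hm).2,
      fun f hf hvf => hmn f (Finset.mem_filter.mpr ⟨hf, hvf⟩)⟩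
  -- the candidate matching: edges first at both endpoints
  let P : G.edgeSet → Prop := fun e => ∀ v ∈ (e : Sym2 V), ∀ f ∈ S, v ∈ (f : Sym2 V) →
    rank v (e : Sym2 V) ≤ rank v (f : Sym2 V)
  let M : Finset G.edgeSet := S.filter P
  have hMmem : ∀ e, e ∈ M ↔ e ∈ S ∧ P e := fun e => Finset.mem_filter
  have hMsub : M ⊆ S := Finset.filter_subset _ _
  have hMfirst : ∀ m ∈ M, ∀ v ∈ (m : Sym2 V), ∀ f ∈ S, v ∈ (f : Sym2 V) →
      rank v (m : Sym2 V) ≤ rank v (f : Sym2 V) := fun m hm => ((hMmem m).mp hm).2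
  -- key lemma: a minimal edge at a busy vertex is in M
  have hBmem : ∀ (v : V) (m : G.edgeSet), m ∈ S → v ∈ (m : Sym2 V) →
      (∀ f ∈ S, v ∈ (f : Sym2 V) → rank v (m : Sym2 V) ≤ rank v (f : Sym2 V)) →
      (∃ e, e ∈ S ∧ v ∈ (e : Sym2 V) ∧ e ≠ m) → m ∈ M := by
    rintro v m hmS hvm hminv ⟨e, heS, hve, hem⟩
    rw [hMmem]
    refine ⟨hmS, ?_⟩
    intro w hw f hfS hwf
    by_contra hlt
    push_neg at hlt
    have hfm : f ≠ m := by rintro rfl; omega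
    by_cases hwv : w = v
    · subst hwv; exact absurd (hminv f hfS hwf) (by omega)
    · have hfr : FreeRider G m := by
        obtain ⟨a, ha⟩ := Sym2.mem_iff_exists.mp hvm
        have hwa : w = a := by
          rcases Sym2.mem_iff.mp (ha ▸ hw) with h | h
          · exact absurd h hwv
          · exact h
        intro x hx
        rcases Sym2.mem_iff.mp (ha ▸ hx) with h | h
        · subst h; exact hnp x e m hve hvm hem
        · rw [h, ← hwa]; exact hnp w f m hwf hw hfm
      have := hlast m hfr v hvm e hve hem
      exact absurd (hminv e heS hve) (by omega)
  -- M is a matching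
  have hmatch : IsMatchingOf G S M := by
    refine ⟨hMsub, ?_⟩
    rintro e he f hf hef v ⟨hve, hvf⟩
    have h1 := hMfirst e he v hve f (hMsub hf) hvf
    have h2 := hMfirst f hf v hvf e (hMsub he) hve
    exact hef (hstrict v e f hve hvf (by omega))
  -- domination (stability)
  have hdom : ∀ e ∈ S, e ∉ M → ∃ f ∈ M, ∃ v : V,
      v ∈ (e : Sym2 V) ∧ v ∈ (f : Sym2 V) ∧ rank v (f : Sym2 V) < rank v (e : Sym2 V) := by
    intro e heS heM
    rw [hMmem, not_and] at heM
    have h := heM heS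
    simp only [P] at h
    push_neg at h
    obtain ⟨v, hve, g, hgS, hvg, hlt⟩ := h
    obtain ⟨m, hmS, hvm, hminv⟩ := hmin v e heS hve
    have hme : m ≠ e := by
      rintro rfl
      exact absurd (hminv g hgS hvg) (by omega)
    have hmM : m ∈ M := hBmem v m hmS hvm hminv ⟨e, heS, hve, Ne.symm hme⟩
    exact ⟨m, hmM, v, hve, hvm, lt_of_le_of_lt (hminv g hgS hvg) hlt⟩
  -- uniqueness
  have huniq : ∀ M' : Finset G.edgeSet, IsStableMatchingOf G rank S M' → M' = M := by
    rintro M' ⟨⟨hsub', hdisj'⟩, hstab'⟩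
    have h1 : M ⊆ M' := by
      intro e heM
      by_contra heM'
      obtain ⟨f, hfM', v, hve, hvf, hlt⟩ := hstab' e (hMsub heM) heM'
      exact absurd (hMfirst e heM v hve f (hsub' hfM') hvf) (by omega)
    apply Finset.Subset.antisymm _ h1
    intro e heM'
    by_contra heM
    obtain ⟨f, hfM, v, hve, hvf, hlt⟩ := hdom e (hsub' heM') heM
    have hef : e ≠ f := by rintro rfl; omega
    exact hdisj' e heM' f (h1 hfM) hef v ⟨hve, hvf⟩
  -- every Sym2 has a member
  have hvert : ∀ z : Sym2 V, ∃ v, v ∈ z := by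
    intro z
    induction z using Sym2.ind with
    | _ a b => exact ⟨a, Sym2.mem_mk_left a b⟩
  -- busy endpoints of M-edges are unique
  have hbusy_unique : ∀ m ∈ M, ∀ v v' : V, v ∈ (m : Sym2 V) → v' ∈ (m : Sym2 V) →
      (∃ f, f ∈ S ∧ v ∈ (f : Sym2 V) ∧ f ≠ m) →
      (∃ f', f' ∈ S ∧ v' ∈ (f' : Sym2 V) ∧ f' ≠ m) → v = v' := by
    rintro m hmM v v' hvm hv'm ⟨f, hfS, hvf, hfm⟩ ⟨f', hf'S, hv'f', hf'm⟩
    by_contra hvv'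
    have hfr : FreeRider G m := by
      obtain ⟨a, ha⟩ := Sym2.mem_iff_exists.mp hvm
      have hv'a : v' = a := by
        rcases Sym2.mem_iff.mp (ha ▸ hv'm) with h | h
        · exact absurd h.symm hvv'
        · exact h
      intro x hx
      rcases Sym2.mem_iff.mp (ha ▸ hx) with h | h
      · subst h; exact hnp x f m hvf hvm hfm
      · rw [h, ← hv'a]; exact hnp v' f' m hv'f' hv'm hf'm
    have := hlast m hfr v hvm f hvf hfm
    exact absurd (hMfirst m hmM v hvm f hfS hvf) (by omega)
  -- choice of cover vertex
  let Q : G.edgeSet → Prop := fun e => ∃ v, v ∈ (e : Sym2 V) ∧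
    ∃ f, f ∈ S ∧ v ∈ (f : Sym2 V) ∧ f ≠ e
  let c : G.edgeSet → V := fun e => if h : Q e then h.choose else (hvert (e : Sym2 V)).choose
  have hc_mem : ∀ e : G.edgeSet, c e ∈ (e : Sym2 V) := by
    intro e
    by_cases h : Q e
    · simp only [c, dif_pos h]; exact h.choose_spec.1
    · simp only [c, dif_neg h]; exact (hvert (e : Sym2 V)).choose_spec
  have hbusy : ∀ m ∈ M, ∀ v : V, v ∈ (m : Sym2 V) →
      (∃ f, f ∈ S ∧ v ∈ (f : Sym2 V) ∧ f ≠ m) → c m = v := by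
    intro m hmM v hvm hf
    have hQ : Q m := ⟨v, hvm, hf⟩
    simp only [c, dif_pos hQ]
    exact hbusy_unique m hmM hQ.choose v hQ.choose_spec.1 hvm hQ.choose_spec.2 hf
  let C : Finset V := M.image c
  have hcov : IsVertexCoverOf G C S := by
    intro f hfS
    by_cases hfM : f ∈ M
    · exact ⟨c f, Finset.mem_image_of_mem c hfM, hc_mem f⟩
    · obtain ⟨m, hmM, v, hvf, hvm, hlt⟩ := hdom f hfS hfM
      have hfm : f ≠ m := by rintro rfl; omega
      have hcm : c m = v := hbusy m hmM v hvm ⟨f, hfS, hvf, hfm⟩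
      exact ⟨c m, Finset.mem_image_of_mem c hmM, by rw [hcm]; exact hvf⟩
  -- weak duality
  have hdual : ∀ M'' : Finset G.edgeSet, IsMatchingOf G S M'' →
      ∀ C' : Finset V, IsVertexCoverOf G C' S → M''.card ≤ C'.card := by
    rintro M'' ⟨hsub, hdisj⟩ C' hcov'
    apply Finset.card_le_card_of_injOn
      (fun e : G.edgeSet => if h : ∃ v ∈ C', v ∈ (e : Sym2 V) then h.choose else (hvert (e : Sym2 V)).choose)
    · intro e he
      have h : ∃ v ∈ C', v ∈ (e : Sym2 V) := hcov' e (hsub he)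
      simp only [dif_pos h]
      exact h.choose_spec.1
    · intro e he f hf hef
      rw [Finset.mem_coe] at he hf
      have he' : ∃ v ∈ C', v ∈ (e : Sym2 V) := hcov' e (hsub he)
      have hf' : ∃ v ∈ C', v ∈ (f : Sym2 V) := hcov' f (hsub hf)
      simp only [dif_pos he', dif_pos hf'] at hef
      by_contra hne
      exact hdisj e he f hf hne he'.choose ⟨he'.choose_spec.2, hef ▸ hf'.choose_spec.2⟩
  have hCcard : C.card ≤ M.card := Finset.card_image_le
  -- matchNum
  have hub : ∀ n ∈ {n | ∃ M'' : Finset G.edgeSet, IsMatchingOf G S M'' ∧ M''.card = n},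
      n ≤ M.card := by
    rintro n ⟨M'', hm'', rfl⟩
    exact le_trans (hdual M'' hm'' C hcov) hCcard
  have hMmm : M.card ∈ {n | ∃ M'' : Finset G.edgeSet, IsMatchingOf G S M'' ∧ M''.card = n} :=
    ⟨M, hmatch, rfl⟩
  have hmatchNum : matchNum G S = M.card := by
    unfold matchNum
    exact le_antisymm (csSup_le ⟨M.card, hMmm⟩ hub) (le_csSup ⟨M.card, hub⟩ hMmm)
  have hvcNum : vcNum G S = M.card := by
    unfold vcNum
    apply le_antisymm
    · exact le_trans (Nat.sInf_le ⟨C, hcov, rfl⟩) hCcard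
    · apply le_csInf
      · exact ⟨C.card, C, hcov, rfl⟩
      · rintro n ⟨C', hc', rfl⟩
        exact hdual M hmatch C' hc'
  exact ⟨M, ⟨hmatch, hdom⟩, huniq, hmatchNum.symm, by rw [hmatchNum, hvcNum]⟩
end

section
/- Let G be a graph all of whose components are trees of diameter at most 3, let C* consist of the centers of the star components and the bases (non-pendant vertices) of the diameter-3 components, and let S be a nonempty edge set with C*_S ⊆ C* a minimum vertex cover of G[S]. Then any vector x = (x_{S,i})_{i∈S} satisfying x_{S,i} ≥ 0, Σ_{i∈δ_S(v)} x_{S,i} ≤ 1 for all vertices v of G[S], with equality Σ_{i∈δ_S(v)} x_{S,i} = 1 for all v ∈ C*_S, and x_{S,i} = 0 for every free rider i incident to other edges of S, has total value Σ_{i∈S} x_{S,i} = τ(G[S]); i.e., it is an optimal fractional matching of G[S]. -/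
/-- Let `G` be a graph whose components are trees of diameter at most `3`, and let
`Cstar` be the set of centers of star components and bases of diameter-3
components: a vertex cover of `G` containing both endpoints of an edge exactly
when that edge is a free rider. Let `S` be a nonempty edge set and `CS ⊆ Cstar` a
minimum vertex cover of `G[S]`. Then every fractional matching `x` of `G[S]`
which saturates every vertex of `CS` and assigns `0` to every free rider incident
to other edges of `S` has total value `τ(G[S])`; i.e. `x` is an optimal
fractional matching of `G[S]` (no feasible `y` has larger total value). -/
theorem saturating_fractional_matching_optimal {V : Type*} [Fintype V] [DecidableEq V]
    (G : SimpleGraph V) [DecidableRel G.Adj]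
    (hacyc : G.IsAcyclic) (hdiam : ∀ u v : V, G.Reachable u v → G.dist u v ≤ 3)
    (Cstar : Finset V)
    (hCcover : ∀ e : G.edgeSet, ∃ v ∈ Cstar, v ∈ (e : Sym2 V))
    (hCfree : ∀ e : G.edgeSet, (∀ v ∈ (e : Sym2 V), v ∈ Cstar) ↔ FreeRider G e)
    (S : Finset G.edgeSet) (hS : S.Nonempty)
    (CS : Finset V) (hsub : CS ⊆ Cstar)
    (hcov : ∀ e ∈ S, ∃ v ∈ CS, v ∈ (e : Sym2 V))
    (hmin : CS.card = vcNum G S)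
    (x : G.edgeSet → ℝ)
    (hx0 : ∀ i ∈ S, 0 ≤ x i)
    (hx1 : ∀ v : V, ∑ i ∈ S.filter (fun i : G.edgeSet => v ∈ (i : Sym2 V)), x i ≤ 1)
    (hxeq : ∀ v ∈ CS, ∑ i ∈ S.filter (fun i : G.edgeSet => v ∈ (i : Sym2 V)), x i = 1)
    (hxfr : ∀ i ∈ S, FreeRider G i →
      (∃ j ∈ S, j ≠ i ∧ ∃ v : V, v ∈ (i : Sym2 V) ∧ v ∈ (j : Sym2 V)) → x i = 0) :
    (∑ i ∈ S, x i = (vcNum G S : ℝ)) ∧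
    (∀ y : G.edgeSet → ℝ, (∀ i ∈ S, 0 ≤ y i) →
      (∀ v : V, ∑ i ∈ S.filter (fun i : G.edgeSet => v ∈ (i : Sym2 V)), y i ≤ 1) →
      ∑ i ∈ S, y i ≤ (vcNum G S : ℝ)) := by

  classical
  -- counting function: number of vertices of CS on edge i
  set c : G.edgeSet → ℕ := fun i => (CS.filter (fun v => v ∈ (i : Sym2 V))).card with hc
  have hswap : ∀ f : G.edgeSet → ℝ,
      ∑ v ∈ CS, ∑ i ∈ S.filter (fun i : G.edgeSet => v ∈ (i : Sym2 V)), f i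
        = ∑ i ∈ S, (c i : ℝ) * f i := by
    intro f
    simp_rw [Finset.sum_filter]
    rw [Finset.sum_comm]
    refine Finset.sum_congr rfl fun i _ => ?_
    rw [← Finset.sum_filter, Finset.sum_const, nsmul_eq_mul, hc]
  have hτle : ∀ C : Finset V, IsVertexCoverOf G C S → vcNum G S ≤ C.card := by
    intro C hC
    exact Nat.sInf_le ⟨C, hC, rfl⟩
  have hc1 : ∀ i ∈ S, 1 ≤ c i := by
    intro i hi
    obtain ⟨v, hv, hvi⟩ := hcov i hi
    exact Finset.card_pos.mpr ⟨v, Finset.mem_filter.mpr ⟨hv, hvi⟩⟩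
  -- structure of an edge
  have hedge : ∀ i : G.edgeSet, ∃ a b : V, a ≠ b ∧ (i : Sym2 V) = s(a, b) := by
    rintro ⟨e, he⟩
    induction e using Sym2.ind with
    | _ a b => exact ⟨a, b, (G.mem_edgeSet.mp he).ne, rfl⟩
  have hc2 : ∀ i : G.edgeSet, c i ≤ 2 := by
    intro i
    obtain ⟨a, b, hab, hib⟩ := hedge i
    have : CS.filter (fun v => v ∈ (i : Sym2 V)) ⊆ {a, b} := by
      intro v hv
      have := (Finset.mem_filter.mp hv).2
      rw [hib, Sym2.mem_iff] at this
      simpa using this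
    calc c i ≤ ({a, b} : Finset V).card := Finset.card_le_card this
      _ ≤ 2 := Finset.card_insert_le _ _ |>.trans (by simp)
  -- if c i = 2 then x i = 0
  have hkey : ∀ i ∈ S, c i = 2 → x i = 0 := by
    intro i hi h2
    obtain ⟨a, b, hab, hib⟩ := hedge i
    have hsubf : CS.filter (fun v => v ∈ (i : Sym2 V)) ⊆ {a, b} := by
      intro v hv
      have := (Finset.mem_filter.mp hv).2
      rw [hib, Sym2.mem_iff] at this
      simpa using this
    have hcardab : ({a, b} : Finset V).card = 2 := by
      rw [Finset.card_insert_of_notMem (by simpa using hab), Finset.card_singleton]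
    have heqf : CS.filter (fun v => v ∈ (i : Sym2 V)) = {a, b} :=
      Finset.eq_of_subset_of_card_le hsubf (by rw [hcardab, ← h2])
    have haCS : a ∈ CS := (Finset.mem_filter.mp (heqf ▸ (by simp : a ∈ ({a,b} : Finset V)))).1
    have hbCS : b ∈ CS := (Finset.mem_filter.mp (heqf ▸ (by simp : b ∈ ({a,b} : Finset V)))).1
    have hfr : FreeRider G i := by
      rw [← hCfree]
      intro v hv
      rw [hib, Sym2.mem_iff] at hv
      rcases hv with rfl | rfl
      · exact hsub haCS
      · exact hsub hbCS
    by_cases hj : ∃ j ∈ S, j ≠ i ∧ ∃ v : V, v ∈ (i : Sym2 V) ∧ v ∈ (j : Sym2 V)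
    · exact hxfr i hi hfr hj
    · exfalso
      push_neg at hj
      -- CS.erase a is a smaller cover
      have hcov' : IsVertexCoverOf G (CS.erase a) S := by
        intro e he
        by_cases hei : e = i
        · refine ⟨b, Finset.mem_erase.mpr ⟨hab.symm, hbCS⟩, ?_⟩
          rw [hei, hib]; simp
        · obtain ⟨v, hv, hve⟩ := hcov e he
          refine ⟨v, Finset.mem_erase.mpr ⟨?_, hv⟩, hve⟩
          rintro rfl
          exact (hj e he hei v (by rw [hib]; simp) hve).elim
      have h1 := hτle _ hcov'
      rw [Finset.card_erase_of_mem haCS, ← hmin] at h1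
      have hpos : 0 < CS.card := Finset.card_pos.mpr ⟨a, haCS⟩
      omega
  have hsum_eq : ∀ f : G.edgeSet → ℝ, (∀ i ∈ S, c i = 2 → f i = 0) →
      ∑ i ∈ S, (c i : ℝ) * f i = ∑ i ∈ S, f i := by
    intro f hf
    refine Finset.sum_congr rfl fun i hi => ?_
    rcases Nat.lt_or_ge (c i) 2 with h | h
    · have h1 : c i = 1 := le_antisymm (by omega) (hc1 i hi)
      rw [h1]; simp
    · have h2 : c i = 2 := le_antisymm (hc2 i) h
      rw [h2, hf i hi h2]; ring
  constructor
  · have := hswap x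
    rw [hsum_eq x (hkey)] at this
    rw [← this]
    have : ∑ v ∈ CS, ∑ i ∈ S.filter (fun i : G.edgeSet => v ∈ (i : Sym2 V)), x i
        = ∑ v ∈ CS, (1 : ℝ) := Finset.sum_congr rfl fun v hv => hxeq v hv
    rw [this, Finset.sum_const, nsmul_eq_mul, mul_one, hmin]
  · intro y hy0 hy1
    have hle1 : ∑ i ∈ S, y i ≤ ∑ i ∈ S, (c i : ℝ) * y i := by
      refine Finset.sum_le_sum fun i hi => ?_
      have h1 : (1 : ℝ) ≤ (c i : ℝ) := by exact_mod_cast hc1 i hi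
      nlinarith [hy0 i hi]
    have hle2 : ∑ i ∈ S, (c i : ℝ) * y i ≤ CS.card := by
      rw [← hswap y]
      calc ∑ v ∈ CS, ∑ i ∈ S.filter (fun i : G.edgeSet => v ∈ (i : Sym2 V)), y i
          ≤ ∑ v ∈ CS, (1 : ℝ) := Finset.sum_le_sum fun v _ => hy1 v
        _ = CS.card := by rw [Finset.sum_const, nsmul_eq_mul, mul_one]
    rw [← hmin]
    exact hle1.trans hle2
end
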